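/- arXiv:2205.06479 — 4 statements merged into one kernel-verified Lean document; each statement's English description precedes it below -/
import Mathlib

section
/- Let 0 ≤ α < 1, 0 ≤ x₁ < x₂ ≤ 1, let 𝓜 = 𝓜_{α,x₁,x₂} be the piecewise linear transformation of [0,1), and let 𝓢 be its maximal invariant set. Then there exists a nonnegative integer N such that 𝓢 = 𝓜^N([0,1)) \ H, where 𝓜^N denotes the N-fold iterate (image of the set) and H = [x₁,x₂). -/
/-- The piecewise linear transformation `𝓜_{α,x₁,x₂}` of the circle `[0,1)`:
`t ↦ ⟨t + α + x₂ - x₁⟩` on `U = [0,x₁)`, identity on `H = [x₁,x₂)`,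
and `t ↦ ⟨t + α⟩` on `V = [x₂,1)`. -/
noncomputable def Mmap (α x₁ x₂ : ℝ) (t : ℝ) : ℝ :=
  if t < x₁ then Int.fract (t + α + x₂ - x₁)
  else if t < x₂ then t
  else Int.fract (t + α)

/-- The maximal invariant set `𝓢` of `𝓜_{α,x₁,x₂}`: points of `[0,1)` whose orbit
never enters `H = [x₁,x₂)`. -/
def Sset (α x₁ x₂ : ℝ) : Set ℝ :=
  {t | t ∈ Set.Ico (0 : ℝ) 1 ∧ ∀ n : ℕ, (Mmap α x₁ x₂)^[n] t ∉ Set.Ico x₁ x₂}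

/-!
On the complement of the hole `H = [x₁, x₂)` the map `𝓜` is the rotation `t ↦ ⟨t + α⟩`
composed with the map collapsing `H`; so it is injective there, preserves Lebesgue measure,
and sends finite unions of intervals `[a, b)` to such unions. The sets `𝓜ⁿ([0,1))` decrease,
and their successive differences ("layers") are pairwise disjoint. Each layer is a finite union
of intervals, and every interval of layer `n + 1` is a translate of an interval of layer `n`
unless one of its endpoints is `0`, `x₁`, `x₂` or `1`. A given endpoint can occur in only one
layer, so from some generation on the intervals never shrink; disjoint layers of measure bounded
below must then stop, i.e. some layer `N` is empty and `𝓜ⁿ([0,1))` is constant from `N` on.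
Points of `𝓢` have a preimage in `𝓢` (otherwise their orbit would run through all layers), so
`𝓢 ⊆ 𝓜ᴺ([0,1)) \ H`. Conversely `C = 𝓜ᴺ([0,1)) \ H` satisfies `C = 𝓜(C) \ H`, and since `𝓜`
preserves measure, `𝓜(C) ∩ H` is a null union of intervals `[a, b)`, hence empty: `C` is
invariant and avoids `H`, so `C ⊆ 𝓢`.
-/

open Set MeasureTheory Function Topology

section Intervals

def intervalUnion (l : List (ℝ × ℝ)) : Set ℝ := ⋃ p ∈ l, Ico p.1 p.2

lemma mem_intervalUnion {l : List (ℝ × ℝ)} {x : ℝ} :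
    x ∈ intervalUnion l ↔ ∃ p ∈ l, x ∈ Ico p.1 p.2 := by
  simp only [intervalUnion, mem_iUnion, exists_prop]

lemma intervalUnion_flatMap (l : List (ℝ × ℝ)) (f : ℝ × ℝ → List (ℝ × ℝ)) :
    intervalUnion (l.flatMap f) = ⋃ p ∈ l, intervalUnion (f p) := by
  ext x
  simp only [mem_iUnion, mem_intervalUnion, List.mem_flatMap, exists_prop]
  grind

lemma measurableSet_intervalUnion (l : List (ℝ × ℝ)) : MeasurableSet (intervalUnion l) :=
  .biUnion l.finite_toSet.countable fun _ _ => measurableSet_Ico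

lemma exists_Ico_subset_intervalUnion {l : List (ℝ × ℝ)} {x : ℝ} (hx : x ∈ intervalUnion l) :
    ∃ b, x < b ∧ Ico x b ⊆ intervalUnion l := by
  obtain ⟨p, hp, hxp⟩ := mem_intervalUnion.1 hx
  exact ⟨p.2, hxp.2, fun y hy => mem_intervalUnion.2 ⟨p, hp, hxp.1.trans hy.1, hy.2⟩⟩

def removeIco (c d : ℝ) (p : ℝ × ℝ) : List (ℝ × ℝ) := [(p.1, min p.2 c), (max p.1 d, p.2)]

lemma intervalUnion_removeIco (c d : ℝ) (p : ℝ × ℝ) :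
    intervalUnion (removeIco c d p) = Ico p.1 p.2 \ Ico c d := by
  ext x
  simp only [mem_intervalUnion, removeIco, List.mem_cons, List.not_mem_nil, or_false,
    exists_eq_or_imp, exists_eq_left, mem_Ico, Set.mem_sdiff, lt_min_iff, max_le_iff]
  grind

lemma intervalUnion_flatMap_removeIco (c d : ℝ) (l : List (ℝ × ℝ)) :
    intervalUnion (l.flatMap (removeIco c d)) = intervalUnion l \ Ico c d := by
  rw [intervalUnion_flatMap, intervalUnion, iUnion_sdiff]
  simp_rw [iUnion_sdiff, intervalUnion_removeIco]

lemma endpoints_of_mem_removeIco {c d : ℝ} {p q : ℝ × ℝ} (hq : q ∈ removeIco c d p) :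
    (q.1 = p.1 ∨ q.1 = d) ∧ (q.2 = p.2 ∨ q.2 = c) := by
  simp only [removeIco, List.mem_cons, List.not_mem_nil, or_false] at hq
  rcases hq with rfl | rfl
  · exact ⟨Or.inl rfl, min_choice _ _⟩
  · exact ⟨max_choice _ _, Or.inl rfl⟩

lemma fract_eq_sub_one {x : ℝ} (h1 : 1 ≤ x) (h2 : x < 2) : Int.fract x = x - 1 :=
  Int.fract_eq_iff.2 ⟨by linarith, by linarith, 1, by push_cast; ring⟩

def fractAddPieces (c : ℝ) (p : ℝ × ℝ) : List (ℝ × ℝ) :=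
  [(p.1 + c, min (p.2 + c) 1), (max (p.1 + c) 1 - 1, p.2 + c - 1)]

lemma image_fract_add_Ico {c : ℝ} {p : ℝ × ℝ} (h0 : 0 ≤ p.1 + c) (h2 : p.2 + c ≤ 2) :
    (fun t => Int.fract (t + c)) '' Ico p.1 p.2 = intervalUnion (fractAddPieces c p) := by
  obtain ⟨a, b⟩ := p
  ext w
  simp only [mem_image, mem_intervalUnion, fractAddPieces, List.mem_cons, List.not_mem_nil,
    or_false, exists_eq_or_imp, exists_eq_left, mem_Ico, lt_min_iff]
  have := le_max_left (a + c) 1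
  have := le_max_right (a + c) 1
  constructor
  · rintro ⟨t, ⟨hat, htb⟩, rfl⟩
    rcases lt_or_ge (t + c) 1 with h | h
    · rw [Int.fract_eq_self.2 ⟨by linarith, h⟩]
      exact Or.inl ⟨by linarith, by linarith, h⟩
    · rw [fract_eq_sub_one h (by linarith)]
      exact Or.inr ⟨by simp only [sub_le_sub_iff_right, max_le_iff]; constructor <;> linarith,
        by linarith⟩
  · rintro (⟨h1, h2, h3⟩ | ⟨h1, h2⟩)
    · refine ⟨w - c, ⟨by linarith, by linarith⟩, ?_⟩
      rw [sub_add_cancel, Int.fract_eq_self]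
      exact ⟨by linarith, h3⟩
    · refine ⟨w + 1 - c, ⟨by linarith, by linarith⟩, ?_⟩
      rw [sub_add_cancel, Int.fract_add_one, Int.fract_eq_self]
      exact ⟨by linarith, by linarith⟩

lemma endpoints_of_mem_fractAddPieces {c : ℝ} {p q : ℝ × ℝ} (hq : q ∈ fractAddPieces c p) :
    ∃ e, (q.1 = p.1 + e ∨ q.1 = 0) ∧ (q.2 = p.2 + e ∨ q.2 = 1) := by
  simp only [fractAddPieces, List.mem_cons, List.not_mem_nil, or_false] at hq
  rcases hq with rfl | rfl
  · exact ⟨c, Or.inl rfl, min_choice _ _⟩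
  · refine ⟨c - 1, ?_, Or.inl (by ring)⟩
    rcases max_choice (p.1 + c) 1 with h | h <;> simp only [h] <;> grind

lemma bounds_of_mem_fractAddPieces {c : ℝ} {p q : ℝ × ℝ} (h0 : 0 ≤ p.1 + c) (h2 : p.2 + c ≤ 2)
    (hq : q ∈ fractAddPieces c p) : 0 ≤ q.1 ∧ q.2 ≤ 1 := by
  simp only [fractAddPieces, List.mem_cons, List.not_mem_nil, or_false] at hq
  rcases hq with rfl | rfl
  · exact ⟨h0, min_le_right _ _⟩
  · exact ⟨by simp, by linarith⟩

lemma bijOn_fract_add (α : ℝ) : BijOn (fun t => Int.fract (t + α)) (Ico 0 1) (Ico 0 1) := by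
  refine ⟨fun t _ => ⟨Int.fract_nonneg _, Int.fract_lt_one _⟩, fun s hs t ht hst => ?_,
    fun w hw => ⟨Int.fract (w - α), ⟨Int.fract_nonneg _, Int.fract_lt_one _⟩, ?_⟩⟩
  · obtain ⟨z, hz⟩ := Int.fract_eq_fract.1 hst
    have h1 : ((-1 : ℤ) : ℝ) < z := by push_cast; linarith [hs.1, ht.2]
    have h2 : (z : ℝ) < (1 : ℤ) := by push_cast; linarith [hs.2, ht.1]
    have hz0 : z = 0 := by have := Int.cast_lt.1 h1; have := Int.cast_lt.1 h2; omega
    simp only [hz0, Int.cast_zero] at hz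
    linarith
  · refine Int.fract_eq_iff.2 ⟨hw.1, hw.2, -⌊w - α⌋, ?_⟩
    push_cast
    linarith [Int.self_sub_fract (w - α)]

end Intervals

section Measure

open scoped ENNReal

lemma volume_image_of_eqOn_add {f : ℝ → ℝ} {s P : Set ℝ} (hs : MeasurableSet s)
    (hP : MeasurableSet P) (hf : InjOn f s) {c d : ℝ} (hc : EqOn f (· + c) (s ∩ P))
    (hd : EqOn f (· + d) (s \ P)) : MeasurableSet (f '' s) ∧ volume (f '' s) = volume s := by
  have translate (e : ℝ) {A : Set ℝ} (hA : MeasurableSet A) :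
      MeasurableSet ((· + e) '' A) ∧ volume ((· + e) '' A) = volume A := by
    rw [image_add_right]
    exact ⟨hA.preimage (measurable_add_const _), measure_preimage_add_right _ _ _⟩
  obtain ⟨hm₁, hv₁⟩ := translate c (hs.inter hP)
  obtain ⟨hm₂, hv₂⟩ := translate d (hs.diff hP)
  have hsplit : f '' s = (· + c) '' (s ∩ P) ∪ (· + d) '' (s \ P) := by
    rw [← hc.image_eq, ← hd.image_eq, ← image_union, inter_union_sdiff]
  have hdisj : Disjoint ((· + c) '' (s ∩ P)) ((· + d) '' (s \ P)) := by
    rw [← hc.image_eq, ← hd.image_eq]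
    exact disjoint_sdiff_inter.symm.image hf inter_subset_left sdiff_subset
  refine ⟨hsplit ▸ hm₁.union hm₂, ?_⟩
  rw [hsplit, measure_union hdisj hm₂, hv₁, hv₂, measure_inter_add_sdiff _ hP]

lemma exists_eq_empty_of_pairwise_disjoint {X : Type*} [MeasurableSpace X] {μ : Measure X}
    {G : ℕ → Set X} (hd : Pairwise (Disjoint on G)) (hm : ∀ n, MeasurableSet (G n))
    (hfin : μ (⋃ n, G n) ≠ ∞) {δ : ℝ≥0∞} (hδ : 0 < δ) {N : ℕ}
    (hbig : ∀ n ≥ N, (G n).Nonempty → δ ≤ μ (G n)) : ∃ n, G n = ∅ := by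
  have h0 : Filter.Tendsto (fun n => μ (G n)) Filter.atTop (𝓝 0) :=
    ENNReal.tendsto_atTop_zero_of_tsum_ne_top (by rwa [← measure_iUnion hd hm])
  obtain ⟨n, hsmall, hn⟩ :=
    ((h0.eventually (gt_mem_nhds hδ)).and (Filter.eventually_ge_atTop N)).exists
  exact ⟨n, not_nonempty_iff_eq_empty.1 fun hne => (hbig n hn hne).not_gt hsmall⟩

end Measure

section Generations

variable {L : ℕ → List (ℝ × ℝ)}

lemma finite_setOf_endpoint_mem (hL : Pairwise (Disjoint on fun n => intervalUnion (L n)))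
    {E : Set ℝ} (hE : E.Finite) :
    {n | ∃ q ∈ L n, q.1 < q.2 ∧ (q.1 ∈ E ∨ q.2 ∈ E)}.Finite := by
  have eq_of_mem {m n : ℕ} {x : ℝ} (hm : x ∈ intervalUnion (L m)) (hn : x ∈ intervalUnion (L n)) :
      m = n :=
    by_contra fun hmn => (hL hmn).ne_of_mem hm hn rfl
  have hleft (e : ℝ) : {n | ∃ q ∈ L n, q.1 < q.2 ∧ q.1 = e}.Subsingleton := by
    rintro m ⟨p, hp, hp', rfl⟩ n ⟨q, hq, hq', he⟩
    exact eq_of_mem (mem_intervalUnion.2 ⟨p, hp, le_rfl, hp'⟩)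
      (mem_intervalUnion.2 ⟨q, hq, he.le, he ▸ hq'⟩)
  have hright (e : ℝ) : {n | ∃ q ∈ L n, q.1 < q.2 ∧ q.2 = e}.Subsingleton := by
    rintro m ⟨p, hp, hp', rfl⟩ n ⟨q, hq, hq', he⟩
    exact eq_of_mem (x := max p.1 q.1)
      (mem_intervalUnion.2 ⟨p, hp, le_max_left _ _, max_lt hp' (he ▸ hq')⟩)
      (mem_intervalUnion.2 ⟨q, hq, le_max_right _ _, he ▸ max_lt hp' (he ▸ hq')⟩)
  refine (hE.biUnion fun e _ => (hleft e).finite.union (hright e).finite).subset ?_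
  rintro n ⟨q, hq, hlt, he | he⟩
  · exact mem_biUnion he (Or.inl ⟨q, hq, hlt, rfl⟩)
  · exact mem_biUnion he (Or.inr ⟨q, hq, hlt, rfl⟩)

lemma exists_pos_le_length {N : ℕ}
    (h : ∀ n ≥ N, ∀ q ∈ L (n + 1), q.1 < q.2 → ∃ p ∈ L n, q.2 - q.1 = p.2 - p.1) :
    ∃ δ > 0, ∀ n ≥ N, ∀ q ∈ L n, q.1 < q.2 → δ ≤ q.2 - q.1 := by
  have hev : ∀ᶠ δ in 𝓝[>] (0 : ℝ), ∀ p ∈ {p | p ∈ L N}, p.1 < p.2 → δ ≤ p.2 - p.1 := by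
    refine (Filter.eventually_all_finite (L N).finite_toSet).2 fun p _ => ?_
    by_cases hp : p.1 < p.2
    · filter_upwards [nhdsWithin_le_nhds (eventually_le_nhds (sub_pos.2 hp))] with δ h _ using h
    · exact .of_forall fun _ h => absurd h hp
  obtain ⟨δ, hδN, hδ⟩ := (hev.and self_mem_nhdsWithin).exists
  refine ⟨δ, hδ, fun n hn => ?_⟩
  induction n, hn using Nat.le_induction with
  | base => exact hδN
  | succ n hn ih =>
    intro q hq hlt
    obtain ⟨p, hp, hlen⟩ := h n hn q hq hlt
    exact hlen ▸ ih p hp (by linarith)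

end Generations

namespace Mmap

variable {α x₁ x₂ : ℝ}

noncomputable def collapse (x₁ x₂ t : ℝ) : ℝ := if t < x₁ then t + (x₂ - x₁) else t

lemma eqOn_fract_collapse_add (α x₁ x₂ : ℝ) :
    EqOn (Mmap α x₁ x₂) (fun t => Int.fract (collapse x₁ x₂ t + α)) (Ico x₁ x₂)ᶜ := by
  intro t ht
  simp only [mem_compl_iff, mem_Ico, not_and, not_lt] at ht
  change Mmap α x₁ x₂ t = Int.fract (collapse x₁ x₂ t + α)
  unfold Mmap collapse
  split_ifs with h1 h2
  · ring_nf
  · exact absurd (ht (not_lt.1 h1)) (not_le.2 h2)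
  · rfl

lemma eqOn_id : EqOn (Mmap α x₁ x₂) id (Ico x₁ x₂) := fun t ht => by
  simp [Mmap, not_lt.2 ht.1, ht.2]

lemma mapsTo_Ico : MapsTo (Mmap α x₁ x₂) (Ico 0 1) (Ico 0 1) := fun t ht => by
  unfold Mmap
  split_ifs
  · exact ⟨Int.fract_nonneg _, Int.fract_lt_one _⟩
  · exact ht
  · exact ⟨Int.fract_nonneg _, Int.fract_lt_one _⟩

lemma strictMonoOn_collapse : StrictMonoOn (collapse x₁ x₂) (Ico x₁ x₂)ᶜ := by
  intro s hs t ht hst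
  simp only [mem_compl_iff, mem_Ico, not_and, not_lt] at hs ht
  unfold collapse
  split_ifs <;> grind

lemma image_collapse (hx0 : 0 ≤ x₁) (hx : x₁ ≤ x₂) (hx2 : x₂ ≤ 1) :
    collapse x₁ x₂ '' (Ico 0 1 \ Ico x₁ x₂) = Ico (x₂ - x₁) 1 := by
  ext w
  simp only [mem_image, Set.mem_sdiff, mem_Ico, not_and, not_lt]
  constructor
  · rintro ⟨t, ⟨⟨h0, h1⟩, hH⟩, rfl⟩
    unfold collapse
    split_ifs <;> grind
  · rintro ⟨h0, h1⟩
    by_cases hw : w < x₂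
    · refine ⟨w - (x₂ - x₁), ⟨⟨by linarith, by linarith⟩, fun h => by linarith⟩, ?_⟩
      rw [collapse, if_pos (by linarith)]
      ring
    · exact ⟨w, ⟨⟨by linarith, h1⟩, fun _ => not_lt.1 hw⟩, by rw [collapse, if_neg (by linarith)]⟩

lemma injOn (hx0 : 0 ≤ x₁) (hx : x₁ ≤ x₂) (hx2 : x₂ ≤ 1) :
    InjOn (Mmap α x₁ x₂) (Ico 0 1 \ Ico x₁ x₂) := by
  have hmaps : MapsTo (collapse x₁ x₂) (Ico 0 1 \ Ico x₁ x₂) (Ico 0 1) := by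
    rw [mapsTo_iff_image_subset, image_collapse hx0 hx hx2]
    exact Ico_subset_Ico_left (by linarith)
  exact ((bijOn_fract_add α).injOn.comp (strictMonoOn_collapse.injOn.mono fun _ ht => ht.2)
    hmaps).congr ((eqOn_fract_collapse_add α x₁ x₂).mono fun _ ht => ht.2).symm

-- On such an interval `𝓜` is a single translation modulo `1`.
def InBranch (x₁ x₂ : ℝ) (p : ℝ × ℝ) : Prop := (0 ≤ p.1 ∧ p.2 ≤ x₁) ∨ (x₂ ≤ p.1 ∧ p.2 ≤ 1)

lemma InBranch.Ico_subset {p : ℝ × ℝ} (hp : InBranch x₁ x₂ p) (hx0 : 0 ≤ x₁) (hx : x₁ ≤ x₂)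
    (hx2 : x₂ ≤ 1) : Ico p.1 p.2 ⊆ Ico 0 1 \ Ico x₁ x₂ := by
  rintro t ⟨h1, h2⟩
  simp only [Set.mem_sdiff, mem_Ico, not_and, not_lt]
  rcases hp with hp | hp <;> grind

lemma inBranch_of_mem_removeIco {q r : ℝ × ℝ} (h0 : 0 ≤ q.1) (h1 : q.2 ≤ 1)
    (hr : r ∈ removeIco x₁ x₂ q) : InBranch x₁ x₂ r := by
  simp only [removeIco, List.mem_cons, List.not_mem_nil, or_false] at hr
  rcases hr with rfl | rfl
  · exact Or.inl ⟨h0, min_le_right _ _⟩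
  · exact Or.inr ⟨le_max_right _ _, h1⟩

noncomputable def collapsePiece (x₁ x₂ : ℝ) (p : ℝ × ℝ) : ℝ × ℝ :=
  if p.2 ≤ x₁ then (p.1 + (x₂ - x₁), p.2 + (x₂ - x₁)) else p

lemma exists_collapsePiece_eq (x₁ x₂ : ℝ) (p : ℝ × ℝ) :
    ∃ e, collapsePiece x₁ x₂ p = (p.1 + e, p.2 + e) := by
  unfold collapsePiece
  split_ifs
  · exact ⟨_, rfl⟩
  · exact ⟨0, by simp⟩

lemma InBranch.image_collapse {p : ℝ × ℝ} (hp : InBranch x₁ x₂ p) (hx : x₁ ≤ x₂) :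
    collapse x₁ x₂ '' Ico p.1 p.2 = Ico (collapsePiece x₁ x₂ p).1 (collapsePiece x₁ x₂ p).2 := by
  unfold collapsePiece
  split_ifs with h
  · rw [← image_add_const_Ico]
    exact EqOn.image_eq fun t ht => if_pos (ht.2.trans_le h)
  · have hV : x₂ ≤ p.1 := by rcases hp with hp | hp <;> grind
    exact (EqOn.image_eq fun t ht => if_neg (by linarith [ht.1])).trans (image_id _)

lemma InBranch.collapsePiece_bounds {p : ℝ × ℝ} (hp : InBranch x₁ x₂ p) (hx0 : 0 ≤ x₁)
    (hx : x₁ ≤ x₂) (hx2 : x₂ ≤ 1) :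
    0 ≤ (collapsePiece x₁ x₂ p).1 ∧ (collapsePiece x₁ x₂ p).2 ≤ 1 := by
  unfold collapsePiece
  split_ifs <;> rcases hp with hp | hp <;> constructor <;> linarith

noncomputable def imagePieces (α x₁ x₂ : ℝ) (p : ℝ × ℝ) : List (ℝ × ℝ) :=
  fractAddPieces α (collapsePiece x₁ x₂ p)

section Pieces

variable (hα0 : 0 ≤ α) (hα1 : α < 1) (hx0 : 0 ≤ x₁) (hx : x₁ ≤ x₂) (hx2 : x₂ ≤ 1)
include hα0 hα1 hx0 hx hx2

lemma InBranch.image_Ico {p : ℝ × ℝ} (hp : InBranch x₁ x₂ p) :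
    Mmap α x₁ x₂ '' Ico p.1 p.2 = intervalUnion (imagePieces α x₁ x₂ p) := by
  obtain ⟨h0, h1⟩ := hp.collapsePiece_bounds hx0 hx hx2
  rw [((eqOn_fract_collapse_add α x₁ x₂).mono
      ((hp.Ico_subset hx0 hx hx2).trans fun _ ht => ht.2)).image_eq,
    ← image_image (fun u => Int.fract (u + α)),
    hp.image_collapse hx, imagePieces, image_fract_add_Ico (by linarith) (by linarith)]

lemma image_intervalUnion {l : List (ℝ × ℝ)} (hl : ∀ p ∈ l, InBranch x₁ x₂ p) :
    Mmap α x₁ x₂ '' intervalUnion l = intervalUnion (l.flatMap (imagePieces α x₁ x₂)) := by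
  rw [intervalUnion_flatMap, intervalUnion, image_iUnion₂]
  exact iUnion₂_congr fun p hp => (hl p hp).image_Ico hα0 hα1 hx0 hx hx2

end Pieces

noncomputable def step (α x₁ x₂ : ℝ) (l : List (ℝ × ℝ)) : List (ℝ × ℝ) :=
  (l.flatMap (imagePieces α x₁ x₂)).flatMap (removeIco x₁ x₂)

lemma inBranch_of_mem_step (hα0 : 0 ≤ α) (hα1 : α < 1) (hx0 : 0 ≤ x₁) (hx : x₁ ≤ x₂)
    (hx2 : x₂ ≤ 1) {l : List (ℝ × ℝ)} (hl : ∀ p ∈ l, InBranch x₁ x₂ p) {q : ℝ × ℝ}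
    (hq : q ∈ step α x₁ x₂ l) : InBranch x₁ x₂ q := by
  simp only [step, List.mem_flatMap] at hq
  obtain ⟨r, ⟨p, hp, hr⟩, hq⟩ := hq
  obtain ⟨h0, h1⟩ := (hl p hp).collapsePiece_bounds hx0 hx hx2
  obtain ⟨hr0, hr1⟩ := bounds_of_mem_fractAddPieces (by linarith) (by linarith) hr
  exact inBranch_of_mem_removeIco hr0 hr1 hq

lemma exists_length_eq_or_endpoint_mem_of_mem_step {l : List (ℝ × ℝ)} {q : ℝ × ℝ}
    (hq : q ∈ step α x₁ x₂ l) :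
    ∃ p ∈ l, q.2 - q.1 = p.2 - p.1 ∨ q.1 ∈ ({0, x₁, x₂, 1} : Set ℝ) ∨
      q.2 ∈ ({0, x₁, x₂, 1} : Set ℝ) := by
  simp only [step, List.mem_flatMap] at hq
  obtain ⟨r, ⟨p, hp, hr⟩, hq⟩ := hq
  obtain ⟨e, he⟩ := exists_collapsePiece_eq x₁ x₂ p
  obtain ⟨e', hr1, hr2⟩ := endpoints_of_mem_fractAddPieces hr
  obtain ⟨hq1, hq2⟩ := endpoints_of_mem_removeIco hq
  rw [he] at hr1 hr2
  refine ⟨p, hp, ?_⟩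
  simp only [mem_insert_iff, mem_singleton_iff]
  grind

lemma volume_image (hα0 : 0 ≤ α) (hα1 : α < 1) (hx0 : 0 ≤ x₁) (hx : x₁ ≤ x₂) (hx2 : x₂ ≤ 1)
    {s : Set ℝ} (hs : MeasurableSet s) (hsB : s ⊆ Ico 0 1 \ Ico x₁ x₂) :
    volume (Mmap α x₁ x₂ '' s) = volume s := by
  have hsH : s ⊆ (Ico x₁ x₂)ᶜ := hsB.trans fun _ ht => ht.2
  have hcol : collapse x₁ x₂ '' s ⊆ Ico 0 1 := by
    refine (image_mono hsB).trans ?_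
    rw [image_collapse hx0 hx hx2]
    exact Ico_subset_Ico_left (by linarith)
  obtain ⟨hm₁, hv₁⟩ := volume_image_of_eqOn_add hs measurableSet_Iio
    (strictMonoOn_collapse.injOn.mono hsH) (c := x₂ - x₁) (d := 0)
    (fun t ht => if_pos ht.2) (fun t ht => (if_neg ht.2).trans (add_zero t).symm)
  have hlow : EqOn (fun t => Int.fract (t + α)) (· + α) (collapse x₁ x₂ '' s ∩ Iio (1 - α)) :=
    fun t ht => Int.fract_eq_self.2 ⟨by linarith [(hcol ht.1).1], by linarith [mem_Iio.1 ht.2]⟩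
  have hhigh :
      EqOn (fun t => Int.fract (t + α)) (· + (α - 1)) (collapse x₁ x₂ '' s \ Iio (1 - α)) :=
    fun t ht => by
      have : 1 - α ≤ t := by simpa using ht.2
      dsimp only
      rw [fract_eq_sub_one (by linarith) (by linarith [(hcol ht.1).2])]
      ring
  obtain ⟨-, hv₂⟩ := volume_image_of_eqOn_add hm₁ measurableSet_Iio
    ((bijOn_fract_add α).injOn.mono hcol) hlow hhigh
  rw [((eqOn_fract_collapse_add α x₁ x₂).mono hsH).image_eq,
    ← image_image (fun u => Int.fract (u + α)), hv₂, hv₁]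

def iterImage (α x₁ x₂ : ℝ) (n : ℕ) : Set ℝ := (Mmap α x₁ x₂)^[n] '' Ico 0 1

def layer (α x₁ x₂ : ℝ) (n : ℕ) : Set ℝ := iterImage α x₁ x₂ n \ iterImage α x₁ x₂ (n + 1)

lemma iterImage_zero : iterImage α x₁ x₂ 0 = Ico 0 1 := image_id _

lemma iterImage_succ (n : ℕ) : iterImage α x₁ x₂ (n + 1) = Mmap α x₁ x₂ '' iterImage α x₁ x₂ n := by
  rw [iterImage, iterImage, iterate_succ', image_comp]

lemma iterImage_subset_Ico (n : ℕ) : iterImage α x₁ x₂ n ⊆ Ico 0 1 :=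
  (mapsTo_Ico.iterate n).image_subset

lemma antitone_iterImage : Antitone (iterImage α x₁ x₂) := by
  refine antitone_nat_of_succ_le fun n => ?_
  induction n with
  | zero => exact iterImage_zero (α := α) ▸ iterImage_subset_Ico 1
  | succ n ih =>
    have := image_mono (f := Mmap α x₁ x₂) ih
    rwa [← iterImage_succ, ← iterImage_succ] at this

lemma pairwise_disjoint_layer : Pairwise (Disjoint on layer α x₁ x₂) := by
  have key {m n : ℕ} (h : m < n) : Disjoint (layer α x₁ x₂ m) (layer α x₁ x₂ n) :=
    disjoint_left.2 fun _ hm hn => hm.2 (antitone_iterImage h hn.1)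
  intro m n hmn
  rcases hmn.lt_or_gt with h | h
  · exact key h
  · exact (key h).symm

section Iterates

variable (hx0 : 0 ≤ x₁) (hx2 : x₂ ≤ 1)
include hx0 hx2

lemma Ico_subset_iterImage (n : ℕ) : Ico x₁ x₂ ⊆ iterImage α x₁ x₂ n := by
  induction n with
  | zero => exact iterImage_zero (α := α) ▸ Ico_subset_Ico hx0 hx2
  | succ n ih => rw [iterImage_succ]; exact fun t ht => ⟨t, ih ht, eqOn_id ht⟩

lemma iterImage_succ_eq_union (n : ℕ) :
    iterImage α x₁ x₂ (n + 1) =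
      Ico x₁ x₂ ∪ Mmap α x₁ x₂ '' (iterImage α x₁ x₂ n \ Ico x₁ x₂) := by
  rw [iterImage_succ]
  nth_rw 1 [← inter_union_sdiff (iterImage α x₁ x₂ n) (Ico x₁ x₂)]
  rw [image_union, inter_eq_right.2 (Ico_subset_iterImage hx0 hx2 n), eqOn_id.image_eq, image_id]

lemma iterImage_sdiff_eq_iterate (n : ℕ) :
    iterImage α x₁ x₂ n \ Ico x₁ x₂ =
      (fun s => Mmap α x₁ x₂ '' s \ Ico x₁ x₂)^[n] (Ico 0 1 \ Ico x₁ x₂) := by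
  induction n with
  | zero => rw [iterImage_zero, iterate_zero_apply]
  | succ n ih => rw [iterate_succ_apply', ← ih, iterImage_succ_eq_union hx0 hx2, union_sdiff_left]

lemma layer_succ (hx : x₁ ≤ x₂) (n : ℕ) :
    layer α x₁ x₂ (n + 1) = Mmap α x₁ x₂ '' layer α x₁ x₂ n \ Ico x₁ x₂ := by
  have hinj : InjOn (Mmap α x₁ x₂) (iterImage α x₁ x₂ n \ Ico x₁ x₂) :=
    (injOn hx0 hx hx2).mono (sdiff_subset_sdiff_left (iterImage_subset_Ico n))
  have hsub : iterImage α x₁ x₂ (n + 1) \ Ico x₁ x₂ ⊆ iterImage α x₁ x₂ n \ Ico x₁ x₂ :=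
    sdiff_subset_sdiff_left (antitone_iterImage n.le_succ)
  have hlayer : (iterImage α x₁ x₂ n \ Ico x₁ x₂) \ (iterImage α x₁ x₂ (n + 1) \ Ico x₁ x₂) =
      layer α x₁ x₂ n := by
    ext t
    have := @Ico_subset_iterImage α x₁ x₂ hx0 hx2 (n + 1) t
    simp only [layer, Set.mem_sdiff]
    tauto
  calc layer α x₁ x₂ (n + 1)
      = (Mmap α x₁ x₂ '' (iterImage α x₁ x₂ n \ Ico x₁ x₂) \
          Mmap α x₁ x₂ '' (iterImage α x₁ x₂ (n + 1) \ Ico x₁ x₂)) \ Ico x₁ x₂ := by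
        conv_lhs =>
          rw [layer, iterImage_succ_eq_union hx0 hx2 n, iterImage_succ_eq_union hx0 hx2 (n + 1)]
        ext t
        simp only [Set.mem_sdiff, mem_union]
        tauto
    _ = Mmap α x₁ x₂ '' layer α x₁ x₂ n \ Ico x₁ x₂ := by
        rw [← hinj.image_sdiff_subset hsub, hlayer]

lemma layer_eq_iterate (hx : x₁ ≤ x₂) (n : ℕ) :
    layer α x₁ x₂ n = (fun s => Mmap α x₁ x₂ '' s \ Ico x₁ x₂)^[n] (layer α x₁ x₂ 0) := by
  induction n with
  | zero => rfl
  | succ n ih => rw [iterate_succ_apply', ← ih, layer_succ hx0 hx2 hx]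

lemma layer_zero (hx : x₁ ≤ x₂) :
    layer α x₁ x₂ 0 = (fun t => Int.fract (t + α)) '' Ico 0 (x₂ - x₁) \ Ico x₁ x₂ := by
  have hB : Mmap α x₁ x₂ '' (Ico 0 1 \ Ico x₁ x₂) =
      (fun t => Int.fract (t + α)) '' Ico (x₂ - x₁) 1 := by
    rw [((eqOn_fract_collapse_add α x₁ x₂).mono fun _ ht => ht.2).image_eq,
      ← image_image (fun u => Int.fract (u + α)), image_collapse hx0 hx hx2]
  have hIco : Ico (0 : ℝ) 1 \ Ico (x₂ - x₁) 1 = Ico 0 (x₂ - x₁) := by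
    ext t
    simp only [Set.mem_sdiff, mem_Ico]
    constructor <;> intro h <;> grind
  have hbij := bijOn_fract_add α
  rw [layer, iterImage_succ_eq_union hx0 hx2, iterImage_zero, hB, ← hIco,
    hbij.injOn.image_sdiff_subset (Ico_subset_Ico_left (by linarith)), hbij.image_eq]
  ext t
  simp only [Set.mem_sdiff, mem_union]
  tauto

end Iterates

section Lists

variable (hα0 : 0 ≤ α) (hα1 : α < 1) (hx0 : 0 ≤ x₁) (hx : x₁ ≤ x₂) (hx2 : x₂ ≤ 1)
include hα0 hα1 hx0 hx hx2

lemma forall_inBranch_iterate_step {l : List (ℝ × ℝ)} (hl : ∀ p ∈ l, InBranch x₁ x₂ p) (n : ℕ) :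
    ∀ q ∈ (step α x₁ x₂)^[n] l, InBranch x₁ x₂ q := by
  induction n with
  | zero => exact hl
  | succ n ih =>
    rw [iterate_succ_apply']
    exact fun q hq => inBranch_of_mem_step hα0 hα1 hx0 hx hx2 ih hq

lemma intervalUnion_iterate_step {l : List (ℝ × ℝ)} (hl : ∀ p ∈ l, InBranch x₁ x₂ p) (n : ℕ) :
    intervalUnion ((step α x₁ x₂)^[n] l) =
      (fun s => Mmap α x₁ x₂ '' s \ Ico x₁ x₂)^[n] (intervalUnion l) := by
  induction n with
  | zero => rfl
  | succ n ih =>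
    rw [iterate_succ_apply', iterate_succ_apply', step, intervalUnion_flatMap_removeIco,
      ← image_intervalUnion hα0 hα1 hx0 hx hx2
        (forall_inBranch_iterate_step hα0 hα1 hx0 hx hx2 hl n), ih]

lemma exists_intervalUnion_eq_iterImage_sdiff (n : ℕ) :
    ∃ l : List (ℝ × ℝ), (∀ p ∈ l, InBranch x₁ x₂ p) ∧
      intervalUnion l = iterImage α x₁ x₂ n \ Ico x₁ x₂ := by
  have hl : ∀ p ∈ removeIco x₁ x₂ (0, 1), InBranch x₁ x₂ p :=
    fun p => inBranch_of_mem_removeIco le_rfl le_rfl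
  refine ⟨_, forall_inBranch_iterate_step hα0 hα1 hx0 hx hx2 hl n, ?_⟩
  rw [intervalUnion_iterate_step hα0 hα1 hx0 hx hx2 hl, intervalUnion_removeIco,
    iterImage_sdiff_eq_iterate hx0 hx2]

theorem exists_layer_eq_empty : ∃ N, layer α x₁ x₂ N = ∅ := by
  set l₀ := (fractAddPieces α (0, x₂ - x₁)).flatMap (removeIco x₁ x₂)
  have hl₀ : ∀ p ∈ l₀, InBranch x₁ x₂ p := by
    simp only [l₀, List.mem_flatMap]
    rintro p ⟨q, hq, hp⟩
    obtain ⟨h0, h1⟩ := bounds_of_mem_fractAddPieces (by dsimp only; linarith)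
      (by dsimp only; linarith) hq
    exact inBranch_of_mem_removeIco h0 h1 hp
  set L := fun n => (step α x₁ x₂)^[n] l₀
  have hL (n : ℕ) : intervalUnion (L n) = layer α x₁ x₂ n := by
    rw [intervalUnion_iterate_step hα0 hα1 hx0 hx hx2 hl₀, intervalUnion_flatMap_removeIco,
      ← image_fract_add_Ico (by dsimp only; linarith) (by dsimp only; linarith),
      layer_eq_iterate hx0 hx2 hx, layer_zero hx0 hx2 hx]
  have hdisj : Pairwise (Disjoint on fun n => intervalUnion (L n)) := by
    simpa only [hL] using pairwise_disjoint_layer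
  obtain ⟨N, hN⟩ := (finite_setOf_endpoint_mem hdisj (toFinite {0, x₁, x₂, 1})).bddAbove
  obtain ⟨δ, hδ, hlen⟩ := exists_pos_le_length (L := L) (N := N + 1) fun n hn q hq hlt => by
    have hq' : q ∈ step α x₁ x₂ (L n) := by simpa only [L, iterate_succ_apply'] using hq
    obtain ⟨p, hp, hpq⟩ := exists_length_eq_or_endpoint_mem_of_mem_step hq'
    refine ⟨p, hp, hpq.resolve_right fun hE => ?_⟩
    have := hN ⟨q, hq, hlt, hE⟩
    omega
  refine exists_eq_empty_of_pairwise_disjoint (μ := volume) pairwise_disjoint_layer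
    (fun n => hL n ▸ measurableSet_intervalUnion _)
    ((measure_mono (iUnion_subset fun n => (sdiff_subset.trans (iterImage_subset_Ico n)))).trans_lt
      measure_Ico_lt_top).ne
    (ENNReal.ofReal_pos.2 hδ) (N := N + 1) fun n hn ⟨x, hx⟩ => ?_
  rw [← hL] at hx ⊢
  obtain ⟨q, hq, hxq⟩ := mem_intervalUnion.1 hx
  calc ENNReal.ofReal δ ≤ ENNReal.ofReal (q.2 - q.1) :=
        ENNReal.ofReal_le_ofReal (hlen n hn q hq (hxq.1.trans_lt hxq.2))
    _ = volume (Ico q.1 q.2) := Real.volume_Ico.symm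
    _ ≤ volume (intervalUnion (L n)) := measure_mono fun y hy => mem_intervalUnion.2 ⟨q, hq, hy⟩

end Lists

lemma subset_Sset_of_mapsTo {C : Set ℝ} (hC : C ⊆ Ico 0 1 \ Ico x₁ x₂)
    (hM : MapsTo (Mmap α x₁ x₂) C C) : C ⊆ Sset α x₁ x₂ :=
  fun _ ht => ⟨(hC ht).1, fun n => (hC (hM.iterate n ht)).2⟩

section Stable

variable (hx0 : 0 ≤ x₁) (hx : x₁ ≤ x₂) (hx2 : x₂ ≤ 1) {N : ℕ} (hN : layer α x₁ x₂ N = ∅)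
include hx0 hx hx2 hN

lemma Sset_subset_image_Sset : Sset α x₁ x₂ ⊆ Mmap α x₁ x₂ '' Sset α x₁ x₂ := by
  rintro t ⟨ht, htH⟩
  have hB : t ∈ Mmap α x₁ x₂ '' (Ico 0 1 \ Ico x₁ x₂) := by
    by_contra hnot
    have hlayer (n : ℕ) : (Mmap α x₁ x₂)^[n] t ∈ layer α x₁ x₂ n := by
      induction n with
      | zero =>
        refine ⟨iterImage_zero (α := α) ▸ ht, ?_⟩
        rw [iterImage_succ_eq_union hx0 hx2, iterImage_zero]
        exact fun h => h.elim (htH 0) hnot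
      | succ n ih =>
        rw [layer_succ hx0 hx2 hx, iterate_succ_apply']
        exact ⟨mem_image_of_mem _ ih, by simpa only [iterate_succ_apply'] using htH (n + 1)⟩
    simpa [hN] using hlayer N
  obtain ⟨u, hu, rfl⟩ := hB
  refine ⟨u, ⟨hu.1, fun n => ?_⟩, rfl⟩
  cases n with
  | zero => exact hu.2
  | succ n => rw [iterate_succ_apply]; exact htH n

lemma Sset_subset_iterImage (n : ℕ) : Sset α x₁ x₂ ⊆ iterImage α x₁ x₂ n := by
  induction n with
  | zero => exact iterImage_zero (α := α) ▸ fun _ ht => ht.1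
  | succ n ih =>
    rw [iterImage_succ]
    exact (Sset_subset_image_Sset hx0 hx hx2 hN).trans (image_mono ih)

lemma mapsTo_iterImage_sdiff (hα0 : 0 ≤ α) (hα1 : α < 1) :
    MapsTo (Mmap α x₁ x₂) (iterImage α x₁ x₂ N \ Ico x₁ x₂) (iterImage α x₁ x₂ N \ Ico x₁ x₂) := by
  obtain ⟨l, hl, hlC⟩ := exists_intervalUnion_eq_iterImage_sdiff hα0 hα1 hx0 hx hx2 N
  set C := iterImage α x₁ x₂ N \ Ico x₁ x₂
  have hstable : iterImage α x₁ x₂ (N + 1) = iterImage α x₁ x₂ N :=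
    (antitone_iterImage N.le_succ).antisymm (sdiff_eq_empty.1 hN)
  have hC : Mmap α x₁ x₂ '' C \ Ico x₁ x₂ = C := by
    rw [← union_sdiff_left, ← iterImage_succ_eq_union hx0 hx2, hstable]
  have hCB : C ⊆ Ico 0 1 \ Ico x₁ x₂ := sdiff_subset_sdiff_left (iterImage_subset_Ico N)
  have hvol := volume_image hα0 hα1 hx0 hx hx2 (hlC ▸ measurableSet_intervalUnion l) hCB
  have hnull : volume (Mmap α x₁ x₂ '' C ∩ Ico x₁ x₂) = 0 := by
    have hfin : volume C ≠ ⊤ :=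
      ((measure_mono (hCB.trans sdiff_subset)).trans_lt measure_Ico_lt_top).ne
    have := measure_inter_add_sdiff (μ := volume) (Mmap α x₁ x₂ '' C)
      (measurableSet_Ico (a := x₁) (b := x₂))
    rw [hC, hvol] at this
    exact (ENNReal.add_left_inj hfin).1 (this.trans (zero_add _).symm)
  -- the image of a union of intervals `[a, b)` is again one, so a nonempty part of it inside
  -- the hole would have positive measure
  have hdisj : Disjoint (Mmap α x₁ x₂ '' C) (Ico x₁ x₂) := by
    refine disjoint_left.2 fun x hxC hxH => ?_
    rw [← hlC, image_intervalUnion hα0 hα1 hx0 hx hx2 hl] at hxC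
    obtain ⟨b, hxb, hsub⟩ := exists_Ico_subset_intervalUnion hxC
    have hle : volume (Ico x (min b x₂)) ≤ volume (Mmap α x₁ x₂ '' C ∩ Ico x₁ x₂) := by
      refine measure_mono fun y hy => ⟨?_, hxH.1.trans hy.1, hy.2.trans_le (min_le_right _ _)⟩
      rw [← hlC, image_intervalUnion hα0 hα1 hx0 hx hx2 hl]
      exact hsub ⟨hy.1, hy.2.trans_le (min_le_left _ _)⟩
    rw [hnull, Real.volume_Ico, nonpos_iff_eq_zero, ENNReal.ofReal_eq_zero] at hle
    linarith [lt_min hxb hxH.2]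
  intro t ht
  rw [← hC]
  exact ⟨mem_image_of_mem _ ht, disjoint_left.1 hdisj (mem_image_of_mem _ ht)⟩

end Stable

end Mmap

open Mmap in
/-- There is an `N` with `𝓢 = 𝓜^N([0,1)) \ H`. -/
theorem maximalInvariantSet_eq_iterate (α x₁ x₂ : ℝ) (hα0 : 0 ≤ α) (hα1 : α < 1)
    (hx0 : 0 ≤ x₁) (hx : x₁ < x₂) (hx2 : x₂ ≤ 1) :
    ∃ N : ℕ, Sset α x₁ x₂ =
      (Mmap α x₁ x₂)^[N] '' Set.Ico (0 : ℝ) 1 \ Set.Ico x₁ x₂ := by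
  obtain ⟨N, hN⟩ := exists_layer_eq_empty hα0 hα1 hx0 hx.le hx2
  refine ⟨N, Subset.antisymm (fun t ht => ⟨Sset_subset_iterImage hx0 hx.le hx2 hN N ht, ht.2 0⟩) ?_⟩
  exact subset_Sset_of_mapsTo (sdiff_subset_sdiff_left (iterImage_subset_Ico N))
    (mapsTo_iterImage_sdiff hx0 hx.le hx2 hN hα0 hα1)
end

section
/- For every a > 0 and every c ∈ ℕ, the Gabor system 𝒢(H_c; a) is not a frame for L²(ℝ). -/
open MeasureTheory

/-- The Gabor coefficient `⟪f, e^{-2πimb·} g(· - na)⟫`. -/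
noncomputable def gaborCoef (g : ℝ → ℂ) (a b : ℝ) (f : ℝ → ℂ) (m n : ℤ) : ℂ :=
  ∫ x : ℝ, f x * (starRingEnd ℂ)
    (Complex.exp (-(2 * Real.pi * Complex.I * (m : ℂ) * (b : ℂ) * (x : ℂ))) * g (x - n * a))

/-- The Gabor system `𝒢(g; a, b)` is a frame for `L²(ℝ)`. -/
def IsGaborFrame (g : ℝ → ℂ) (a b : ℝ) : Prop :=
  ∃ A B : ℝ, 0 < A ∧ 0 < B ∧
    ∀ f : ℝ → ℂ, MemLp f 2 (volume : Measure ℝ) →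
      (A * ∫ x : ℝ, ‖f x‖ ^ 2) ≤ (∑' mn : ℤ × ℤ, ‖gaborCoef g a b f mn.1 mn.2‖ ^ 2) ∧
      (∑' mn : ℤ × ℤ, ‖gaborCoef g a b f mn.1 mn.2‖ ^ 2) ≤ B * ∫ x : ℝ, ‖f x‖ ^ 2

/-- The window `H_c = -χ_{[-c,0)} + χ_{[0,c)}`. -/
noncomputable def HaarC (c : ℝ) : ℝ → ℂ := fun x =>
  if -c ≤ x ∧ x < 0 then (-1 : ℂ) else if 0 ≤ x ∧ x < c then 1 else 0

noncomputable def Emn (m : ℤ) (x : ℝ) : ℂ :=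
  Complex.exp (2 * Real.pi * Complex.I * (m : ℂ) * (x : ℂ))

lemma Emn_cont (m : ℤ) : Continuous (Emn m) :=
  Complex.continuous_exp.comp (by continuity)

lemma norm_Emn (m : ℤ) (x : ℝ) : ‖Emn m x‖ = 1 := by
  have h : (2 * (Real.pi:ℂ) * Complex.I * (m : ℂ) * (x : ℂ))
      = ((2 * Real.pi * m * x : ℝ) : ℂ) * Complex.I := by push_cast; ring
  rw [Emn, h, Complex.norm_exp_ofReal_mul_I]

noncomputable def Jmn (m : ℤ) (p q : ℝ) : ℂ := ∫ x in Set.Ico p q, Emn m x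

lemma Jmn_empty (m : ℤ) {p q : ℝ} (h : q ≤ p) : Jmn m p q = 0 := by
  simp [Jmn, Set.Ico_eq_empty (not_lt.mpr h)]

lemma Jmn_eq (m : ℤ) (hm : m ≠ 0) {p q : ℝ} (h : p ≤ q) :
    Jmn m p q = (Emn m q - Emn m p) / (2 * Real.pi * Complex.I * m) := by
  have h2 : (2 * (Real.pi:ℂ) * Complex.I * m) ≠ 0 := by
    simp [Real.pi_ne_zero, Complex.I_ne_zero, hm, Complex.ofReal_ne_zero]
  have h3 := integral_exp_mul_complex (a := p) (b := q) h2
  rw [Jmn, setIntegral_congr_set MeasureTheory.Ico_ae_eq_Ioc, ← intervalIntegral.integral_of_le h]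
  simp only [Emn]
  rw [show (fun x : ℝ => Complex.exp (2 * (Real.pi:ℂ) * Complex.I * m * x))
      = fun x : ℝ => Complex.exp ((2 * (Real.pi:ℂ) * Complex.I * m) * x) from rfl, h3]

lemma norm_Jmn_le (m : ℤ) {p q : ℝ} {L : ℝ} (hL : 0 ≤ L) (h : q - p ≤ L) :
    ‖Jmn m p q‖ ≤ L := by
  rcases le_or_gt q p with hqp | hpq
  · rw [Jmn_empty m hqp]; simpa using hL
  · rw [Jmn]
    have hb := norm_setIntegral_le_of_norm_le_const (f := Emn m) (s := Set.Ico p q)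
      (μ := volume) (C := 1) (by simp [Real.volume_Ico])
      (fun x _ => le_of_eq (norm_Emn m x))
    rw [Real.volume_real_Ico_of_le (by linarith)] at hb
    calc ‖∫ x in Set.Ico p q, Emn m x‖ ≤ 1 * (q - p) := hb
      _ ≤ L := by linarith

lemma norm_Jmn_le_inv (m : ℤ) (hm : m ≠ 0) (p q : ℝ) :
    ‖Jmn m p q‖ ≤ 1 / (Real.pi * |(m:ℝ)|) := by
  have hpos : 0 < Real.pi * |(m:ℝ)| := by
    have : (0:ℝ) < |(m:ℝ)| := by simp [abs_pos, hm]
    positivity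
  rcases le_or_gt q p with hqp | hpq
  · rw [Jmn_empty m hqp]; simp; positivity
  · rw [Jmn_eq m hm hpq.le]
    have hnorm : ‖(2 * (Real.pi:ℂ) * Complex.I * m)‖ = 2 * Real.pi * |(m:ℝ)| := by
      simp [abs_of_pos Real.pi_pos]
    rw [norm_div, hnorm]
    have h2 : ‖Emn m q - Emn m p‖ ≤ 2 := by
      calc ‖Emn m q - Emn m p‖ ≤ ‖Emn m q‖ + ‖Emn m p‖ := norm_sub_le _ _
        _ = 2 := by rw [norm_Emn, norm_Emn]; norm_num
    rw [div_le_div_iff₀ (by positivity) hpos]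
    calc ‖Emn m q - Emn m p‖ * (Real.pi * |(m:ℝ)|) ≤ 2 * (Real.pi * |(m:ℝ)|) := by nlinarith
      _ = 1 * (2 * Real.pi * |(m:ℝ)|) := by ring

lemma Emn_add_int (m : ℤ) (p : ℝ) (k : ℤ) : Emn m (p + k) = Emn m p := by
  have h : (2 * (Real.pi:ℂ) * Complex.I * (m:ℂ) * ((p:ℝ) + (k:ℤ) : ℂ))
      = 2 * (Real.pi:ℂ) * Complex.I * m * p + ((m * k : ℤ) : ℂ) * (2 * Real.pi * Complex.I) := by
    push_cast; ring
  rw [Emn, Emn]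
  rw [show ((((p + (k:ℝ)) : ℝ)) : ℂ) = (((p:ℝ) + (k:ℤ) : ℂ)) by push_cast; ring, h,
    Complex.exp_add, Complex.exp_int_mul_two_pi_mul_I, mul_one]

lemma Jmn_int_length (m : ℤ) (hm : m ≠ 0) (p : ℝ) (k : ℕ) : Jmn m p (p + k) = 0 := by
  rw [Jmn_eq m hm (le_add_of_nonneg_right (by positivity))]
  rw [show ((k:ℝ)) = ((k:ℤ):ℝ) by push_cast; ring, Emn_add_int]
  simp

lemma Jmn_zero_eq (p q : ℝ) (L : ℝ) : Jmn 0 p (p + L) = Jmn 0 q (q + L) := by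
  simp [Jmn, Emn, Real.volume_Ico]

lemma conj_exp_eq (m : ℤ) (x : ℝ) :
    (starRingEnd ℂ) (Complex.exp (-(2 * Real.pi * Complex.I * (m : ℂ) * (((1:ℝ)) : ℂ) * (x : ℂ))))
      = Emn m x := by
  rw [← Complex.exp_conj, Emn]
  congr 1
  simp only [map_neg, map_mul, Complex.conj_I, Complex.conj_ofReal, map_ofNat, map_intCast,
    Complex.ofReal_one, map_one]
  ring

lemma conj_HaarC (c : ℝ) (y : ℝ) : (starRingEnd ℂ) (HaarC c y) = HaarC c y := by
  unfold HaarC; split_ifs <;> simp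

lemma integrand_decomp (c : ℝ) (R t : ℝ) (m : ℤ) (x : ℝ) :
    (Set.Ico (-R) R).indicator (fun _ => (1:ℂ)) x *
      (starRingEnd ℂ) (Complex.exp (-(2 * Real.pi * Complex.I * (m : ℂ) * (((1:ℝ)) : ℂ) * (x : ℂ)))
        * HaarC c (x - t))
    = (Set.Ico (max (-R) t) (min R (t + c))).indicator (Emn m) x
      - (Set.Ico (max (-R) (t - c)) (min R t)).indicator (Emn m) x := by
  rw [map_mul, conj_exp_eq, conj_HaarC]
  by_cases hx : x ∈ Set.Ico (-R) R
  · obtain ⟨hx1, hx2⟩ := hx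
    rw [Set.indicator_of_mem (Set.mem_Ico.mpr ⟨hx1, hx2⟩), one_mul]
    by_cases hA : -c ≤ x - t ∧ x - t < 0
    · have m2 : x ∈ Set.Ico (max (-R) (t - c)) (min R t) :=
        ⟨max_le hx1 (by linarith [hA.1]), lt_min hx2 (by linarith [hA.2])⟩
      have m1 : x ∉ Set.Ico (max (-R) t) (min R (t + c)) := by
        intro hmem
        have : t ≤ x := le_trans (le_max_right _ _) hmem.1
        linarith [hA.2]
      rw [Set.indicator_of_mem m2, Set.indicator_of_notMem m1]
      show Emn m x * (if -c ≤ x - t ∧ x - t < 0 then (-1:ℂ) else _) = _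
      rw [if_pos hA]; ring
    · by_cases hB : (0:ℝ) ≤ x - t ∧ x - t < c
      · have m1 : x ∈ Set.Ico (max (-R) t) (min R (t + c)) :=
          ⟨max_le hx1 (by linarith [hB.1]), lt_min hx2 (by linarith [hB.2])⟩
        have m2 : x ∉ Set.Ico (max (-R) (t - c)) (min R t) := by
          intro hmem
          have : x < t := lt_of_lt_of_le hmem.2 (min_le_right _ _)
          linarith [hB.1]
        rw [Set.indicator_of_mem m1, Set.indicator_of_notMem m2]
        show Emn m x * (if -c ≤ x - t ∧ x - t < 0 then (-1:ℂ)
          else if (0:ℝ) ≤ x - t ∧ x - t < c then 1 else 0) = _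
        rw [if_neg hA, if_pos hB]; ring
      · have m1 : x ∉ Set.Ico (max (-R) t) (min R (t + c)) := by
          intro hmem
          exact hB ⟨by linarith [le_trans (le_max_right _ _) hmem.1],
            by linarith [lt_of_lt_of_le hmem.2 (min_le_right _ _)]⟩
        have m2 : x ∉ Set.Ico (max (-R) (t - c)) (min R t) := by
          intro hmem
          exact hA ⟨by linarith [le_trans (le_max_right _ _) hmem.1],
            by linarith [lt_of_lt_of_le hmem.2 (min_le_right _ _)]⟩
        rw [Set.indicator_of_notMem m1, Set.indicator_of_notMem m2]
        show Emn m x * (if -c ≤ x - t ∧ x - t < 0 then (-1:ℂ)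
          else if (0:ℝ) ≤ x - t ∧ x - t < c then 1 else 0) = _
        rw [if_neg hA, if_neg hB]; ring
  · have m1 : x ∉ Set.Ico (max (-R) t) (min R (t + c)) := by
      intro hmem
      exact hx ⟨le_trans (le_max_left _ _) hmem.1, lt_of_lt_of_le hmem.2 (min_le_left _ _)⟩
    have m2 : x ∉ Set.Ico (max (-R) (t - c)) (min R t) := by
      intro hmem
      exact hx ⟨le_trans (le_max_left _ _) hmem.1, lt_of_lt_of_le hmem.2 (min_le_left _ _)⟩
    rw [Set.indicator_of_notMem hx, Set.indicator_of_notMem m1, Set.indicator_of_notMem m2]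
    ring

lemma coef_eq (c : ℝ) (aa : ℝ) (R : ℝ) (m n : ℤ) :
    gaborCoef (HaarC c) aa 1 ((Set.Ico (-R) R).indicator (fun _ => (1:ℂ))) m n
      = Jmn m (max (-R) (n*aa)) (min R (n*aa + c))
        - Jmn m (max (-R) (n*aa - c)) (min R (n*aa)) := by
  rw [gaborCoef]
  rw [integral_congr_ae (Filter.Eventually.of_forall (fun x => integrand_decomp c R (n*aa) m x))]
  have hint : ∀ l u : ℝ, Integrable ((Set.Ico l u).indicator (Emn m)) volume := fun l u =>
    (integrable_indicator_iff measurableSet_Ico).2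
      (((Emn_cont m).integrableOn_Icc).mono_set Set.Ico_subset_Icc_self)
  rw [integral_sub (hint _ _) (hint _ _), integral_indicator measurableSet_Ico,
    integral_indicator measurableSet_Ico]
  rfl

lemma coef_good (c : ℕ) (aa R : ℝ) (m n : ℤ) (h1 : -R ≤ (n:ℝ)*aa - c) (h2 : (n:ℝ)*aa + c ≤ R) :
    gaborCoef (HaarC c) aa 1 ((Set.Ico (-R) R).indicator fun _ => (1:ℂ)) m n = 0 := by
  have hc0 : (0:ℝ) ≤ c := Nat.cast_nonneg c
  rw [coef_eq]
  rw [max_eq_right (by linarith : -R ≤ (n:ℝ)*aa), min_eq_right h2,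
      max_eq_right h1, min_eq_right (by linarith : (n:ℝ)*aa ≤ R)]
  rcases eq_or_ne m 0 with rfl | hm
  · have h := Jmn_zero_eq ((n:ℝ)*aa) ((n:ℝ)*aa - c) (c:ℝ)
    rw [show (n:ℝ)*aa - c + c = (n:ℝ)*aa by ring] at h
    rw [h, sub_self]
  · have hB := Jmn_int_length m hm ((n:ℝ)*aa - c) c
    rw [show (n:ℝ)*aa - c + c = (n:ℝ)*aa by ring] at hB
    rw [Jmn_int_length m hm, hB, sub_zero]

lemma coef_far (c : ℕ) (aa R : ℝ) (m n : ℤ) (h : R + c ≤ |(n:ℝ)*aa|) :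
    gaborCoef (HaarC c) aa 1 ((Set.Ico (-R) R).indicator fun _ => (1:ℂ)) m n = 0 := by
  have hc0 : (0:ℝ) ≤ c := Nat.cast_nonneg c
  rw [coef_eq]
  rcases le_total 0 ((n:ℝ)*aa) with hn | hn
  · rw [abs_of_nonneg hn] at h
    rw [Jmn_empty m (le_trans (min_le_left _ _)
        (le_trans (by linarith : R ≤ (n:ℝ)*aa) (le_max_right _ _))),
      Jmn_empty m (le_trans (min_le_left _ _)
        (le_trans (by linarith : R ≤ (n:ℝ)*aa - c) (le_max_right _ _))), sub_self]
  · rw [abs_of_nonpos hn] at h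
    rw [Jmn_empty m (le_trans (min_le_right _ _)
        (le_trans (by linarith : (n:ℝ)*aa + c ≤ -R) (le_max_left _ _))),
      Jmn_empty m (le_trans (min_le_right _ _)
        (le_trans (by linarith : (n:ℝ)*aa ≤ -R) (le_max_left _ _))), sub_self]

lemma coef_bound (c : ℕ) (aa R : ℝ) (m n : ℤ) :
    ‖gaborCoef (HaarC c) aa 1 ((Set.Ico (-R) R).indicator fun _ => (1:ℂ)) m n‖
      ≤ if m = 0 then 2*(c:ℝ) else 2/(Real.pi * |(m:ℝ)|) := by
  have hc0 : (0:ℝ) ≤ c := Nat.cast_nonneg c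
  rw [coef_eq]
  refine le_trans (norm_sub_le _ _) ?_
  split_ifs with hm
  · have b1 : ‖Jmn m (max (-R) ((n:ℝ)*aa)) (min R ((n:ℝ)*aa + c))‖ ≤ (c:ℝ) :=
      norm_Jmn_le m hc0 (by
        have h1 := min_le_right R ((n:ℝ)*aa + c)
        have h2 := le_max_right (-R) ((n:ℝ)*aa); linarith)
    have b2 : ‖Jmn m (max (-R) ((n:ℝ)*aa - c)) (min R ((n:ℝ)*aa))‖ ≤ (c:ℝ) :=
      norm_Jmn_le m hc0 (by
        have h1 := min_le_right R ((n:ℝ)*aa)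
        have h2 := le_max_right (-R) ((n:ℝ)*aa - c); linarith)
    linarith
  · have b1 := norm_Jmn_le_inv m hm (max (-R) ((n:ℝ)*aa)) (min R ((n:ℝ)*aa + c))
    have b2 := norm_Jmn_le_inv m hm (max (-R) ((n:ℝ)*aa - c)) (min R ((n:ℝ)*aa))
    have he : 2/(Real.pi * |(m:ℝ)|) = 1/(Real.pi*|(m:ℝ)|) + 1/(Real.pi*|(m:ℝ)|) := by ring
    rw [he]; exact add_le_add b1 b2

noncomputable def phiB (c : ℕ) (m : ℤ) : ℝ :=
  (if m = 0 then 2*(c:ℝ) else 2/(Real.pi * |(m:ℝ)|))^2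

lemma phiB_nonneg (c : ℕ) (m : ℤ) : 0 ≤ phiB c m := sq_nonneg _

lemma phiB_summable (c : ℕ) : Summable (phiB c) := by
  have h1 : Summable (fun m : ℤ => (4/Real.pi^2) * ((1:ℝ)/(m:ℝ)^2)) :=
    ((Real.summable_one_div_int_pow (p := 2)).mpr one_lt_two).mul_left _
  have h2 := h1.update 0 ((2*(c:ℝ))^2)
  refine h2.congr (fun m => ?_)
  rcases eq_or_ne m 0 with rfl | hm
  · simp [Function.update, phiB]
  · rw [Function.update_of_ne hm, phiB, if_neg hm]
    have habs : |(m:ℝ)| ≠ 0 := by simp [hm]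
    rw [div_pow, mul_pow, ← sq_abs (m:ℝ)]
    field_simp
    ring

/-- For every `a > 0` and every positive integer `c`, `𝒢(H_c; a)` is not a frame. -/
theorem haar_integer_width_not_frame (a : ℝ) (ha : 0 < a) (c : ℕ) (hc : 0 < c) :
    ¬IsGaborFrame (HaarC (c : ℝ)) a 1 := by
  rintro ⟨A, B, hA, hB, hframe⟩
  set C0 : ℝ := ∑' m : ℤ, phiB c m with hC0
  have hC0nn : 0 ≤ C0 := tsum_nonneg (fun m => phiB_nonneg c m)
  have hfrac : 0 ≤ 2*(c:ℝ)/a := div_nonneg (by positivity) ha.le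
  set K : ℝ := (2*(c:ℝ)/a + 1 + (2*(c:ℝ)/a + 1)) * C0 with hK
  have hKnn : 0 ≤ K := mul_nonneg (by linarith) hC0nn
  have key : ∀ N : ℕ, A * (2*(N:ℝ)) ≤ K := by
    intro N
    set R : ℝ := (N:ℝ) with hR
    set f : ℝ → ℂ := (Set.Ico (-R) R).indicator (fun _ => (1:ℂ)) with hf
    have hmem : MemLp f 2 volume :=
      memLp_indicator_const 2 measurableSet_Ico 1 (Or.inr (by simp [Real.volume_Ico]))
    have hint : (∫ x : ℝ, ‖f x‖^2) = 2*(N:ℝ) := by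
      have he : (fun x => ‖f x‖^2) = (Set.Ico (-R) R).indicator (fun _ => (1:ℝ)) := by
        funext x
        by_cases hx : x ∈ Set.Ico (-R) R <;>
          simp [hf, Set.indicator_of_mem, Set.indicator_of_notMem, hx]
      rw [he, integral_indicator measurableSet_Ico, setIntegral_const, smul_eq_mul, mul_one,
        Real.volume_real_Ico_of_le (by rw [hR]; have h0 : (0:ℝ) ≤ (N:ℝ) := Nat.cast_nonneg N; linarith)]
      rw [hR]; ring
    have hlow := (hframe f hmem).1
    rw [hint] at hlow
    refine le_trans hlow ?_
    set T : Finset ℤ :=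
      (Finset.Ioc ⌊(R - c)/a⌋ ⌊(R + c)/a⌋) ∪ (Finset.Ioc ⌊(-(R + c))/a⌋ ⌊(-(R - c))/a⌋) with hT
    have cardIoc : ∀ lo hi : ℝ, hi - lo = 2*(c:ℝ)/a →
        ((Finset.Ioc ⌊lo⌋ ⌊hi⌋).card : ℝ) ≤ 2*(c:ℝ)/a + 1 := by
      intro lo hi hlen
      rw [Int.card_Ioc]
      have h1 : (⌊hi⌋ : ℝ) ≤ hi := Int.floor_le hi
      have h2 : lo < ⌊lo⌋ + 1 := Int.lt_floor_add_one lo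
      have h3 : (((⌊hi⌋ - ⌊lo⌋).toNat : ℤ) : ℝ) = max ((⌊hi⌋ : ℝ) - ⌊lo⌋) 0 := by
        rw [Int.toNat_eq_max]
        push_cast
        rfl
      rw [show (((⌊hi⌋ - ⌊lo⌋).toNat : ℕ) : ℝ) = (((⌊hi⌋ - ⌊lo⌋).toNat : ℤ) : ℝ) by push_cast; ring,
        h3]
      exact max_le (by linarith) (by linarith)
    have hTcard : (T.card : ℝ) ≤ 2*(c:ℝ)/a + 1 + (2*(c:ℝ)/a + 1) := by
      have hc1 := cardIoc ((R - c)/a) ((R + c)/a) (by field_simp; ring)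
      have hc2 := cardIoc ((-(R + c))/a) ((-(R - c))/a) (by field_simp; ring)
      have hcu : (T.card : ℝ) ≤ ((Finset.Ioc ⌊(R - c)/a⌋ ⌊(R + c)/a⌋).card : ℝ)
          + ((Finset.Ioc ⌊(-(R + c))/a⌋ ⌊(-(R - c))/a⌋).card : ℝ) := by
        rw [hT]
        exact_mod_cast Finset.card_union_le _ _
      linarith
    have hvanish : ∀ m n : ℤ, n ∉ T → gaborCoef (HaarC (c:ℝ)) a 1 f m n = 0 := by
      intro m n hn
      by_cases hgood : |(n:ℝ)*a| ≤ R - c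
      · obtain ⟨hg1, hg2⟩ := abs_le.1 hgood
        exact coef_good c a R m n (by linarith) (by linarith)
      · apply coef_far c a R m n
        by_contra hfar
        push_neg at hfar hgood
        apply hn
        rw [hT, Finset.mem_union]
        rcases le_total 0 ((n:ℝ)*a) with hs | hs
        · left
          rw [abs_of_nonneg hs] at hgood hfar
          rw [Finset.mem_Ioc]
          exact ⟨Int.floor_lt.mpr ((div_lt_iff₀ ha).mpr hgood),
            Int.le_floor.mpr ((le_div_iff₀ ha).mpr hfar.le)⟩
        · right
          rw [abs_of_nonpos hs] at hgood hfar
          rw [Finset.mem_Ioc]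
          exact ⟨Int.floor_lt.mpr ((div_lt_iff₀ ha).mpr (by linarith)),
            Int.le_floor.mpr ((le_div_iff₀ ha).mpr (by linarith))⟩
    refine tsum_le_of_sum_le' hKnn ?_
    intro s
    classical
    set s' := s.filter (fun p : ℤ × ℤ => p.2 ∈ T) with hs'
    have hsum_eq : ∑ p ∈ s, ‖gaborCoef (HaarC (c:ℝ)) a 1 f p.1 p.2‖^2
        = ∑ p ∈ s', ‖gaborCoef (HaarC (c:ℝ)) a 1 f p.1 p.2‖^2 := by
      refine (Finset.sum_filter_of_ne ?_).symm
      intro p _ hne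
      by_contra hnt
      exact hne (by rw [hvanish p.1 p.2 hnt]; simp)
    rw [hsum_eq]
    have hsub : s' ⊆ (s'.image Prod.fst) ×ˢ T := by
      intro p hp
      rw [Finset.mem_product]
      exact ⟨Finset.mem_image_of_mem _ hp, (Finset.mem_filter.1 hp).2⟩
    calc ∑ p ∈ s', ‖gaborCoef (HaarC (c:ℝ)) a 1 f p.1 p.2‖^2
        ≤ ∑ p ∈ (s'.image Prod.fst) ×ˢ T, ‖gaborCoef (HaarC (c:ℝ)) a 1 f p.1 p.2‖^2 :=
          Finset.sum_le_sum_of_subset_of_nonneg hsub (fun _ _ _ => by positivity)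
      _ ≤ ∑ p ∈ (s'.image Prod.fst) ×ˢ T, phiB c p.1 := by
          refine Finset.sum_le_sum (fun p _ => ?_)
          rw [phiB]
          exact pow_le_pow_left₀ (norm_nonneg _) (coef_bound c a R p.1 p.2) 2
      _ = ∑ m ∈ s'.image Prod.fst, ∑ _n ∈ T, phiB c m := Finset.sum_product _ _ _
      _ = (T.card : ℝ) * ∑ m ∈ s'.image Prod.fst, phiB c m := by
          rw [Finset.mul_sum]
          refine Finset.sum_congr rfl (fun m _ => ?_)
          rw [Finset.sum_const, nsmul_eq_mul]
      _ ≤ (T.card : ℝ) * C0 :=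
          mul_le_mul_of_nonneg_left
            (Summable.sum_le_tsum _ (fun m _ => phiB_nonneg c m) (phiB_summable c)) (Nat.cast_nonneg _)
      _ ≤ K := by rw [hK]; exact mul_le_mul_of_nonneg_right hTcard hC0nn
  obtain ⟨N, hN⟩ := exists_nat_gt (K / (2*A))
  have hKlt : K < 2*A*(N:ℝ) := by
    have := (div_lt_iff₀ (by positivity : (0:ℝ) < 2*A)).1 hN
    linarith
  have hle := key N
  nlinarith
end

section
/- Let Q = (q_n)_{n∈ℤ} be a square-summable sequence of real numbers and let N ≥ 1 be an integer. Define Λ_N := {n ∈ ℤ : |q_n| ≥ (1/2)·sup{|q_k| : n − N ≤ k ≤ n + N}}. Then ∑_{n∈Λ_N} q_n² ≥ (3/(32N)) ∑_{n∈ℤ} q_n². -/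
/-!
From a non-dominant index `n` the window maximum `f n` lies within distance `N` and carries
more than four times the energy of `n`. Since the energies are bounded, iterating `f` reaches
a dominant index `τ n` after some `j` steps, with `4 ^ j * q_n² ≤ q_{τ n}²` and
`|τ n - n| ≤ N j`; by Bernoulli's inequality this gives `q_n² ≤ r ^ |τ n - n| * q_{τ n}²` for
`r = 1 - 3/(4N)`. As `n ↦ (τ n, τ n - n)` is injective, summing over `n` bounds the total
energy by the energy on the dominant indices times `∑_{d ∈ ℤ} r ^ |d| ≤ 8N/3`.
-/

open Function

section IterateChain

variable {α : Type*} {u : α → ℝ} {f : α → α} {P : α → Prop} {c : ℝ}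

theorem pow_mul_le_apply_iterate (hc : 0 ≤ c) (hf : ∀ x, ¬P x → c * u x ≤ u (f x)) :
    ∀ (j : ℕ) (x : α), (∀ i < j, ¬P (f^[i] x)) → c ^ j * u x ≤ u (f^[j] x)
  | 0, x, _ => by simp
  | j + 1, x, hx => by
    rw [iterate_succ_apply']
    calc c ^ (j + 1) * u x = c * (c ^ j * u x) := by ring
      _ ≤ c * u (f^[j] x) := by
        gcongr
        exact pow_mul_le_apply_iterate hc hf j x fun i hi => hx i (by omega)
      _ ≤ u (f (f^[j] x)) := hf _ (hx j (by omega))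

theorem exists_iterate_of_mul_lt_apply (hu : BddAbove (Set.range u)) (hu0 : ∀ x, 0 ≤ u x)
    (hc : 1 < c) (hf : ∀ x, ¬P x → c * u x < u (f x)) (x : α) : ∃ j, P (f^[j] x) := by
  by_contra! h
  have hpos : 0 < u (f x) := (mul_nonneg (by linarith) (hu0 x)).trans_lt (hf x (h 0))
  obtain ⟨B, hB⟩ := hu
  obtain ⟨j, hj⟩ := pow_unbounded_of_one_lt (B / u (f x)) hc
  rw [div_lt_iff₀ hpos] at hj
  have hgrow := pow_mul_le_apply_iterate (by linarith) (fun y hy => (hf y hy).le) j (f x)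
    fun i _ => by simpa only [← iterate_succ_apply] using h (i + 1)
  linarith [hB (Set.mem_range_self (f^[j] (f x)))]

theorem exists_iterate_and_pow_mul_le (hu : BddAbove (Set.range u)) (hu0 : ∀ x, 0 ≤ u x)
    (hc : 1 < c) (hf : ∀ x, ¬P x → c * u x < u (f x)) (x : α) :
    ∃ j, P (f^[j] x) ∧ c ^ j * u x ≤ u (f^[j] x) := by
  classical
  have hex := exists_iterate_of_mul_lt_apply hu hu0 hc hf x
  exact ⟨Nat.find hex, Nat.find_spec hex, pow_mul_le_apply_iterate (by linarith)
    (fun y hy => (hf y hy).le) _ x fun i hi => Nat.find_min hex hi⟩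

end IterateChain

theorem natAbs_iterate_sub_le {f : ℤ → ℤ} {N : ℕ} (hf : ∀ n, (f n - n).natAbs ≤ N) :
    ∀ (j : ℕ) (n : ℤ), (f^[j] n - n).natAbs ≤ N * j
  | 0, n => by simp
  | j + 1, n => by
    rw [iterate_succ_apply', Nat.mul_succ]
    have := hf (f^[j] n)
    have := natAbs_iterate_sub_le hf j n
    omega

theorem one_div_four_le_one_sub_pow {N : ℕ} (hN : 1 ≤ N) :
    (1 : ℝ) / 4 ≤ (1 - 3 / (4 * N)) ^ N := by
  have hN' : (1 : ℝ) ≤ N := by exact_mod_cast hN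
  have hsmall : 3 / (4 * (N : ℝ)) ≤ 2 := by
    rw [div_le_iff₀ (by positivity)]; linarith
  calc (1 : ℝ) / 4 = 1 + N * (-(3 / (4 * N))) := by field_simp; ring
    _ ≤ (1 + -(3 / (4 * N))) ^ N := one_add_mul_le_pow (by linarith) N
    _ = (1 - 3 / (4 * N)) ^ N := by ring

theorem hasSum_pow_natAbs {r : ℝ} (hr0 : 0 ≤ r) (hr1 : r < 1) :
    HasSum (fun d : ℤ => r ^ d.natAbs) ((1 + r) / (1 - r)) := by
  have hneg (n : ℕ) : (-((n : ℤ) + 1)).natAbs = n + 1 := by omega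
  have hsum := HasSum.of_nat_of_neg_add_one (f := fun d : ℤ => r ^ d.natAbs)
    (by simpa only [Int.natAbs_natCast] using hasSum_geometric_of_lt_one hr0 hr1)
    (by simpa only [hneg, pow_succ'] using (hasSum_geometric_of_lt_one hr0 hr1).mul_left r)
  convert hsum using 1
  field_simp

theorem tsum_le_tsum_subtype_mul_tsum {α : Type*} [AddGroup α] {q w : α → ℝ} {p : α → Prop}
    (hq : Summable q) (hq0 : ∀ n, 0 ≤ q n) (hw : Summable w) (hw0 : ∀ d, 0 ≤ w d)
    (τ : α → {m // p m}) (hτ : ∀ n, q n ≤ q (τ n) * w (τ n - n)) :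
    ∑' n, q n ≤ (∑' m : {m // p m}, q m) * ∑' d, w d := by
  have hqp : Summable fun m : {m // p m} => q m := hq.subtype _
  have hprod : Summable fun z : {m // p m} × α => q z.1 * w z.2 :=
    hqp.mul_of_nonneg hw (fun m => hq0 m) hw0
  rw [hqp.tsum_mul_tsum hw hprod]
  refine hq.tsum_le_tsum_of_inj (fun n => (τ n, τ n - n)) ?_
    (fun z _ => mul_nonneg (hq0 _) (hw0 _)) hτ hprod
  intro a b hab
  simp only [Prod.mk.injEq] at hab
  obtain ⟨h1, h2⟩ := hab
  rw [h1] at h2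
  exact sub_right_inj.mp h2

def IsWindowDominant (Q : ℤ → ℝ) (N : ℕ) (n : ℤ) : Prop :=
  (1 / 2) * sSup ((fun k => |Q k|) '' Set.Icc (n - (N : ℤ)) (n + (N : ℤ))) ≤ |Q n|

theorem exists_window_step (Q : ℤ → ℝ) (N : ℕ) :
    ∃ f : ℤ → ℤ, ∀ n, (f n - n).natAbs ≤ N ∧
      (¬IsWindowDominant Q N n → 4 * Q n ^ 2 < Q (f n) ^ 2) := by
  choose f hf_mem hf_eq using fun n : ℤ =>
    ((Set.nonempty_Icc.2 (by omega : n - N ≤ n + N)).image fun k => |Q k|).csSup_mem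
      ((Set.finite_Icc _ _).image _)
  refine ⟨f, fun n => ⟨?_, fun hn => ?_⟩⟩
  · have := Set.mem_Icc.mp (hf_mem n)
    omega
  · rw [IsWindowDominant, ← hf_eq n, not_le] at hn
    nlinarith [abs_nonneg (Q n), sq_abs (Q n), sq_abs (Q (f n))]

theorem exists_isWindowDominant_sq_le {Q : ℤ → ℝ} (hQ : Summable fun n => Q n ^ 2) (N : ℕ)
    {r : ℝ} (hr0 : 0 ≤ r) (hr1 : r ≤ 1) (hrN : 1 / 4 ≤ r ^ N) :
    ∃ τ : ℤ → {m // IsWindowDominant Q N m}, ∀ n,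
      Q n ^ 2 ≤ Q (τ n) ^ 2 * r ^ ((τ n : ℤ) - n).natAbs := by
  obtain ⟨f, hf⟩ := exists_window_step Q N
  have hbdd : BddAbove (Set.range fun n => Q n ^ 2) :=
    ⟨∑' n, Q n ^ 2, by rintro _ ⟨n, rfl⟩; exact hQ.le_tsum n fun _ _ => sq_nonneg _⟩
  choose J hJ_dom hJ_grow using exists_iterate_and_pow_mul_le hbdd (fun n => sq_nonneg (Q n))
    (by norm_num : (1 : ℝ) < 4) fun n => (hf n).2
  refine ⟨fun n => ⟨f^[J n] n, hJ_dom n⟩, fun n => ?_⟩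
  calc Q n ^ 2 = (1 / 4) ^ J n * (4 ^ J n * Q n ^ 2) := by
        rw [← mul_assoc, ← mul_pow]; norm_num
    _ ≤ (r ^ N) ^ J n * Q (f^[J n] n) ^ 2 := by
        gcongr
        exact hJ_grow n
    _ ≤ r ^ (f^[J n] n - n).natAbs * Q (f^[J n] n) ^ 2 := by
        rw [← pow_mul]
        exact mul_le_mul_of_nonneg_right (pow_le_pow_of_le_one hr0 hr1
          (natAbs_iterate_sub_le (fun m => (hf m).1) (J n) n)) (sq_nonneg _)
    _ = _ := mul_comm _ _

/-- For a square-summable sequence `(q_n)_{n∈ℤ}` and `N ≥ 1`, the set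
`Λ_N = {n : |q_n| ≥ (1/2)·sup_{|k-n|≤N} |q_k|}` carries at least a `3/(32N)`
fraction of the total energy. -/
theorem energy_on_dominant_indices (Q : ℤ → ℝ) (hQ : Summable fun n => Q n ^ 2)
    (N : ℕ) (hN : 1 ≤ N) :
    (3 / (32 * (N : ℝ))) * ∑' n : ℤ, Q n ^ 2 ≤
      ∑' n : {n : ℤ //
        (1 / 2) * sSup ((fun k => |Q k|) '' Set.Icc (n - (N : ℤ)) (n + (N : ℤ))) ≤ |Q n|},
        Q (n : ℤ) ^ 2 := by
  set r : ℝ := 1 - 3 / (4 * N)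
  have hN' : (1 : ℝ) ≤ N := by exact_mod_cast hN
  have hr0 : 0 ≤ r := by
    rw [sub_nonneg, div_le_one (by positivity)]; linarith
  have hr1 : r < 1 := by
    rw [sub_lt_self_iff]; positivity
  obtain ⟨τ, hτ⟩ := exists_isWindowDominant_sq_le hQ N hr0 hr1.le (one_div_four_le_one_sub_pow hN)
  have hweight := hasSum_pow_natAbs hr0 hr1
  have hcompare := tsum_le_tsum_subtype_mul_tsum hQ (fun n => sq_nonneg (Q n)) hweight.summable
    (fun d => pow_nonneg hr0 _) τ hτ
  rw [hweight.tsum_eq] at hcompare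
  have hweight_le : (1 + r) / (1 - r) ≤ 8 * N / 3 := by
    rw [show 1 - r = 3 / (4 * N) by ring, div_le_iff₀ (by positivity)]
    field_simp
    linarith
  have hS : 0 ≤ ∑' m : {m // IsWindowDominant Q N m}, Q m ^ 2 := tsum_nonneg fun _ => sq_nonneg _
  calc 3 / (32 * (N : ℝ)) * ∑' n, Q n ^ 2
      ≤ 3 / (32 * N) * ((∑' m : {m // IsWindowDominant Q N m}, Q m ^ 2) * (8 * N / 3)) := by
        gcongr
        exact hcompare.trans (mul_le_mul_of_nonneg_left hweight_le hS)
    _ ≤ ∑' m : {m // IsWindowDominant Q N m}, Q m ^ 2 := by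
        field_simp
        nlinarith
end

section
/- Let 0 ≤ α < 1, 0 ≤ x₁ < x₂ ≤ 1, let 𝓜 = 𝓜_{α,x₁,x₂} be the piecewise linear transformation of [0,1) with maximal invariant set 𝓢, and suppose 𝓢 ≠ ∅. Then for every ε with 0 < ε < 1: (i) 𝓢 ∩ [0,ε) ≠ ∅ or 𝓢 ∩ ⟨[x₂, x₂+ε)⟩ ≠ ∅; (ii) 𝓢 ∩ [1−ε,1) ≠ ∅ or 𝓢 ∩ ⟨[x₁−ε, x₁)⟩ ≠ ∅; (iii) 𝓢 ∩ [0,ε) ≠ ∅ or 𝓢 ∩ [1−ε,1) ≠ ∅; (iv) 𝓢 ∩ ⟨[x₁−ε, x₁)⟩ ≠ ∅ or 𝓢 ∩ ⟨[x₂, x₂+ε)⟩ ≠ ∅. Here ⟨I⟩ := {⟨t⟩ : t ∈ I} denotes the image of an interval I under the fractional-part map. -/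
/-!
On `[0,1) \ H` the map `𝓜` translates `U` by `α + x₂ - x₁` and `V` by `α`, so two points lying in
the same piece keep their distance under `𝓜`, and `𝓢` is the largest `𝓜`-invariant subset of
`[0,1) \ H`.

(i), (ii): if `𝓢` avoided the right-hand neighbourhoods of `0` and `x₂` (resp. the left-hand
neighbourhoods of `1` and `x₁`), translation by `-ε` (resp. `+ε`) would keep every point of `𝓢` in
its piece, so the nonempty set `𝓢 ⊆ [0,1)` would be invariant under a translation.

(iii): if `𝓢` avoids both sides of `0`, two close points of `𝓢` stay at constant distance forever.
Applied to two close points of one orbit, this makes every point of `𝓢` periodic, since `𝓜` is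
injective off `H`. A periodic `p ∈ 𝓢` just left of `x₁` and a point `z ∈ 𝓢` just right of `x₂`
have images at distance `(x₁ - p) + (z - x₂)`, so after one period the orbit of `z` reaches
`x₁ + (z - x₂) ∈ H`.

(iv): if `𝓢` avoids both sides of `H`, then `0 ∈ 𝓢`, because `𝓢` accumulates at `0` from the right
by (i) and contains its right accumulation points (`𝓜` is right-continuous). Then `𝓢 + [0, ε)` is
invariant, as a translate that wraps past `1` is a translate of `0`. Hence `[0,1) ⊆ 𝓢`, which
contradicts `x₁ ∉ 𝓢`.
-/

open Set Function

theorem Int.fract_fract_add {R : Type*} [Ring R] [LinearOrder R] [IsOrderedRing R] [FloorRing R]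
    (a b : R) : Int.fract (Int.fract a + b) = Int.fract (a + b) := by
  rw [Int.fract_eq_fract]
  exact ⟨-⌊a⌋, by rw [Int.fract]; push_cast; abel⟩

theorem mem_image_fract_of_mem {p : ℝ} {s : Set ℝ} (hp : p ∈ s) (hp₁ : p ∈ Ico 0 1) :
    p ∈ Int.fract '' s :=
  ⟨p, hp, Int.fract_eq_self.2 hp₁⟩

theorem image_fract_Ico_subset_right {a : ℝ} (ha₀ : 0 ≤ a) (ha₁ : a ≤ 1) (θ : ℝ) :
    Int.fract '' Ico a (a + θ) ⊆ Ico a (a + θ) ∪ Ico 0 θ := by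
  rintro _ ⟨y, hy, rfl⟩
  by_cases hy₁ : y < 1
  · rw [Int.fract_eq_self.2 ⟨ha₀.trans hy.1, hy₁⟩]
    exact Or.inl hy
  · have : (1 : ℝ) ≤ ⌊y⌋ := by exact_mod_cast Int.le_floor.2 (by exact_mod_cast not_lt.1 hy₁)
    refine Or.inr ⟨Int.fract_nonneg y, ?_⟩
    rw [Int.fract]
    linarith [hy.2]

theorem image_fract_Ico_subset_left {a : ℝ} (ha₀ : 0 ≤ a) (ha₁ : a ≤ 1) (θ : ℝ) :
    Int.fract '' Ico (a - θ) a ⊆ Ico (a - θ) a ∪ Ico (1 - θ) 1 := by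
  rintro _ ⟨y, hy, rfl⟩
  by_cases hy₀ : 0 ≤ y
  · rw [Int.fract_eq_self.2 ⟨hy₀, hy.2.trans_le ha₁⟩]
    exact Or.inl hy
  · have : (⌊y⌋ : ℝ) ≤ -1 := by exact_mod_cast Int.floor_le_neg_one_iff.2 (not_le.1 hy₀)
    refine Or.inr ⟨?_, Int.fract_lt_one y⟩
    rw [Int.fract]
    linarith [hy.1]

theorem eq_zero_of_forall_add_nat_mul_mem_Icc {a g b c : ℝ}
    (h : ∀ k : ℕ, a + k * g ∈ Icc b c) : g = 0 := by
  by_contra hg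
  obtain ⟨k, hk⟩ := exists_nat_gt ((c - b) / |g|)
  have h₀ := h 0
  simp only [Nat.cast_zero, zero_mul, add_zero] at h₀
  have hbound : |(k : ℝ) * g| ≤ c - b := by
    rw [abs_le]
    constructor <;> linarith [(h k).1, (h k).2, h₀.1, h₀.2]
  rw [div_lt_iff₀ (abs_pos.2 hg)] at hk
  rw [abs_mul, Nat.abs_cast] at hbound
  linarith

theorem eq_zero_of_forall_add_mem {A : Set ℝ} {b c e : ℝ} (hA : A ⊆ Icc b c) (hne : A.Nonempty)
    (h : ∀ p ∈ A, p + e ∈ A) : e = 0 := by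
  obtain ⟨s, hs⟩ := hne
  have hk : ∀ k : ℕ, s + k * e ∈ A := by
    intro k
    induction k with
    | zero => simpa using hs
    | succ k ih => simpa [add_mul, add_assoc] using h _ ih
  exact eq_zero_of_forall_add_nat_mul_mem_Icc fun k => hA (hk k)

theorem Ico_subset_of_forall_add_mem {A : Set ℝ} {δ c : ℝ} (hδ : 0 < δ) (h₀ : 0 ∈ A)
    (h : ∀ a ∈ A, ∀ d ∈ Ico 0 δ, a + d < c → a + d ∈ A) : Ico 0 c ⊆ A := by
  rintro t ⟨ht₀, htc⟩
  obtain ⟨n, hn⟩ := exists_nat_gt (t / δ)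
  have hn₀ : (0 : ℝ) < n := (div_nonneg ht₀ hδ.le).trans_lt hn
  have hstep : t / n ∈ Ico 0 δ := by
    refine ⟨div_nonneg ht₀ hn₀.le, ?_⟩
    rw [div_lt_iff₀ hn₀]
    rwa [div_lt_iff₀ hδ, mul_comm] at hn
  have hj : ∀ j ≤ n, (j : ℝ) * (t / n) ∈ A := by
    intro j hj
    induction j with
    | zero => simpa using h₀
    | succ j ih =>
      have hle : ((j : ℝ) + 1) * (t / n) ≤ t := by
        calc ((j : ℝ) + 1) * (t / n) ≤ n * (t / n) :=
              mul_le_mul_of_nonneg_right (by exact_mod_cast hj) hstep.1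
          _ = t := mul_div_cancel₀ t hn₀.ne'
      push_cast
      rw [add_one_mul]
      exact h _ (ih (by omega)) _ hstep (by linarith)
  simpa [mul_div_cancel₀ t hn₀.ne'] using hj n le_rfl

theorem exists_lt_abs_sub_lt_of_forall_mem_Icc {u : ℕ → ℝ} {b c : ℝ} (hu : ∀ n, u n ∈ Icc b c)
    {ζ : ℝ} (hζ : 0 < ζ) : ∃ p q, p < q ∧ |u q - u p| < ζ := by
  obtain ⟨_, -, φ, hφ, hlim⟩ := isCompact_Icc.tendsto_subseq hu
  obtain ⟨N, hN⟩ := Metric.cauchySeq_iff'.1 hlim.cauchySeq ζ hζ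
  exact ⟨φ N, φ (N + 1), hφ N.lt_succ_self, by simpa [Real.dist_eq] using hN (N + 1) N.le_succ⟩

variable {α x₁ x₂ : ℝ}

theorem Mmap_of_lt {t : ℝ} (h : t < x₁) : Mmap α x₁ x₂ t = Int.fract (t + α + x₂ - x₁) :=
  if_pos h

theorem Mmap_of_le (hx : x₁ ≤ x₂) {t : ℝ} (h : x₂ ≤ t) : Mmap α x₁ x₂ t = Int.fract (t + α) := by
  simp [Mmap, not_lt.2 h, not_lt.2 (hx.trans h)]

theorem Mmap_mem_Ico {t : ℝ} (ht : t ∈ Ico (0 : ℝ) 1) : Mmap α x₁ x₂ t ∈ Ico (0 : ℝ) 1 := by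
  unfold Mmap
  split_ifs
  · exact ⟨Int.fract_nonneg _, Int.fract_lt_one _⟩
  · exact ht
  · exact ⟨Int.fract_nonneg _, Int.fract_lt_one _⟩

theorem Mmap_eq_fract_add_sub (hx : x₁ ≤ x₂) {p q : ℝ}
    (h : p < x₁ ∧ q < x₁ ∨ x₂ ≤ p ∧ x₂ ≤ q) :
    Mmap α x₁ x₂ q = Int.fract (Mmap α x₁ x₂ p + (q - p)) := by
  rcases h with ⟨hp, hq⟩ | ⟨hp, hq⟩
  · rw [Mmap_of_lt hp, Mmap_of_lt hq, Int.fract_fract_add]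
    ring_nf
  · rw [Mmap_of_le hx hp, Mmap_of_le hx hq, Int.fract_fract_add]
    ring_nf

theorem Mmap_eq_fract_add_of_lt_of_le (hx : x₁ ≤ x₂) {p z : ℝ} (hp : p < x₁) (hz : x₂ ≤ z) :
    Mmap α x₁ x₂ z = Int.fract (Mmap α x₁ x₂ p + ((z - x₂) + (x₁ - p))) := by
  rw [Mmap_of_lt hp, Mmap_of_le hx hz, Int.fract_fract_add]
  ring_nf

theorem injOn_Mmap (hx : x₁ ≤ x₂) : InjOn (Mmap α x₁ x₂) (Ico 0 1 \ Ico x₁ x₂) := by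
  have int_eq_zero : ∀ k : ℤ, (-1 : ℝ) < k → (k : ℝ) < 1 → k = 0 := fun k h₁ h₂ => by
    have : -1 < k := by exact_mod_cast h₁
    have : k < 1 := by exact_mod_cast h₂
    omega
  rintro t ⟨ht, htH⟩ t' ⟨ht', ht'H⟩ h
  simp only [mem_Ico, not_and, not_lt] at ht ht' htH ht'H
  rcases lt_or_ge t x₁ with h₁ | h₁ <;> rcases lt_or_ge t' x₁ with h₂ | h₂
  · rw [Mmap_of_lt h₁, Mmap_of_lt h₂] at h
    obtain ⟨k, hk⟩ := Int.fract_eq_fract.1 h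
    rw [int_eq_zero k (by linarith) (by linarith), Int.cast_zero] at hk
    linarith
  · rw [Mmap_of_lt h₁, Mmap_of_le hx (ht'H h₂)] at h
    obtain ⟨k, hk⟩ := Int.fract_eq_fract.1 h
    rw [int_eq_zero k (by linarith) (by linarith [ht'H h₂]), Int.cast_zero] at hk
    linarith [ht'H h₂]
  · rw [Mmap_of_le hx (htH h₁), Mmap_of_lt h₂] at h
    obtain ⟨k, hk⟩ := Int.fract_eq_fract.1 h
    rw [int_eq_zero k (by linarith [htH h₁]) (by linarith), Int.cast_zero] at hk
    linarith [htH h₁]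
  · rw [Mmap_of_le hx (htH h₁), Mmap_of_le hx (ht'H h₂)] at h
    obtain ⟨k, hk⟩ := Int.fract_eq_fract.1 h
    rw [int_eq_zero k (by linarith) (by linarith), Int.cast_zero] at hk
    linarith

theorem Sset_subset_diff : Sset α x₁ x₂ ⊆ Ico 0 1 \ Ico x₁ x₂ :=
  fun _ ht => ⟨ht.1, ht.2 0⟩

theorem lt_or_le_of_mem_Sset {t : ℝ} (ht : t ∈ Sset α x₁ x₂) : t < x₁ ∨ x₂ ≤ t := by
  rcases lt_or_ge t x₁ with h | h
  · exact Or.inl h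
  · exact Or.inr (not_lt.1 fun h' => ht.2 0 ⟨h, h'⟩)

theorem mapsTo_Mmap_Sset : MapsTo (Mmap α x₁ x₂) (Sset α x₁ x₂) (Sset α x₁ x₂) := by
  intro t ht
  refine ⟨Mmap_mem_Ico ht.1, fun n => ?_⟩
  rw [← iterate_succ_apply]
  exact ht.2 (n + 1)

theorem iterate_mem_Sset {t : ℝ} (ht : t ∈ Sset α x₁ x₂) (n : ℕ) :
    (Mmap α x₁ x₂)^[n] t ∈ Sset α x₁ x₂ :=
  mapsTo_Mmap_Sset.iterate n ht

theorem subset_Sset_of_mapsTo {W : Set ℝ} (hW : W ⊆ Ico 0 1 \ Ico x₁ x₂)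
    (hM : MapsTo (Mmap α x₁ x₂) W W) : W ⊆ Sset α x₁ x₂ :=
  fun _ hw => ⟨(hW hw).1, fun n => (hW (hM.iterate n hw)).2⟩

theorem add_mem_Sset_of_forall (hx : x₁ ≤ x₂) {e : ℝ}
    (h : ∀ p ∈ Sset α x₁ x₂, p + e ∈ Ico 0 1 ∧ (p < x₁ ∧ p + e < x₁ ∨ x₂ ≤ p ∧ x₂ ≤ p + e)) :
    ∀ p ∈ Sset α x₁ x₂, p + e ∈ Sset α x₁ x₂ := by
  have hW : (· + e) '' Sset α x₁ x₂ ⊆ Sset α x₁ x₂ := by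
    refine subset_Sset_of_mapsTo ?_ ?_
    · rintro _ ⟨p, hp, rfl⟩
      refine ⟨(h p hp).1, fun hH => ?_⟩
      rcases (h p hp).2 with ⟨-, h'⟩ | ⟨-, h'⟩
      · exact not_le.2 h' hH.1
      · exact not_lt.2 h' hH.2
    · rintro _ ⟨p, hp, rfl⟩
      have hMp := mapsTo_Mmap_Sset hp
      refine ⟨_, hMp, ?_⟩
      rw [Mmap_eq_fract_add_sub hx (h p hp).2, add_sub_cancel_left,
        Int.fract_eq_self.2 (h _ hMp).1]
  exact fun p hp => hW ⟨p, hp, rfl⟩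

theorem mem_Sset_of_forall_inter_Ico_nonempty (hx : x₁ ≤ x₂) {p : ℝ} (hp : p ∈ Ico (0 : ℝ) 1)
    (h : ∀ θ > 0, (Sset α x₁ x₂ ∩ Ico p (p + θ)).Nonempty) : p ∈ Sset α x₁ x₂ := by
  let R := {q ∈ Ico (0 : ℝ) 1 | ∀ θ > 0, (Sset α x₁ x₂ ∩ Ico q (q + θ)).Nonempty}
  have hRH : ∀ q ∈ R, q ∉ Ico x₁ x₂ := by
    rintro q ⟨-, hq⟩ hH
    obtain ⟨z, hz, hqz, hzx⟩ := hq (x₂ - q) (by linarith [hH.2])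
    exact hz.2 0 ⟨hH.1.trans hqz, show z < x₂ by linarith⟩
  refine subset_Sset_of_mapsTo (W := R) (fun q hq => ⟨hq.1, hRH q hq⟩) ?_ ⟨hp, h⟩
  rintro q ⟨hq, hqS⟩
  obtain ⟨w, hw, hpiece⟩ : ∃ w > 0, ∀ z, q ≤ z → z < q + w →
      q < x₁ ∧ z < x₁ ∨ x₂ ≤ q ∧ x₂ ≤ z := by
    rcases lt_or_ge q x₁ with hq' | hq'
    · exact ⟨x₁ - q, by linarith, fun z _ hz => Or.inl ⟨hq', by linarith⟩⟩
    · have hq'' : x₂ ≤ q := not_lt.1 fun h' => hRH q ⟨hq, hqS⟩ ⟨hq', h'⟩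
      exact ⟨1, one_pos, fun z hz _ => Or.inr ⟨hq'', hq''.trans hz⟩⟩
  have hMq := Mmap_mem_Ico (α := α) (x₁ := x₁) (x₂ := x₂) hq
  refine ⟨hMq, fun θ hθ => ?_⟩
  obtain ⟨z, hz, hqz, hzq⟩ :=
    hqS (min θ (min w (1 - Mmap α x₁ x₂ q))) (lt_min hθ (lt_min hw (by linarith [hMq.2])))
  have hzθ : z < q + θ := hzq.trans_le (by simp)
  have hzw : z < q + w := hzq.trans_le (by simp)
  have hz1 : z < q + (1 - Mmap α x₁ x₂ q) := hzq.trans_le (by simp)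
  have hMz : Mmap α x₁ x₂ z = Mmap α x₁ x₂ q + (z - q) := by
    rw [Mmap_eq_fract_add_sub hx (hpiece z hqz hzw),
      Int.fract_eq_self.2 ⟨by linarith [hMq.1], by linarith⟩]
  exact ⟨_, mapsTo_Mmap_Sset hz, by rw [hMz]; constructor <;> linarith⟩

theorem Sset_accumulates_right_of_zero_or_x₂ (hx : x₁ ≤ x₂) (hS : (Sset α x₁ x₂).Nonempty)
    {ε : ℝ} (hε : 0 < ε) :
    (Sset α x₁ x₂ ∩ Ico 0 ε).Nonempty ∨
      (Sset α x₁ x₂ ∩ Int.fract '' Ico x₂ (x₂ + ε)).Nonempty := by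
  by_contra h
  rw [not_or] at h
  obtain ⟨h₀, h₂⟩ := h
  have hshift : ∀ p ∈ Sset α x₁ x₂, p + -ε ∈ Sset α x₁ x₂ := by
    refine add_mem_Sset_of_forall hx fun p hp => ?_
    have hpε : ε ≤ p := not_lt.1 fun h' => h₀ ⟨p, hp, hp.1.1, h'⟩
    refine ⟨⟨by linarith, by linarith [hp.1.2]⟩, ?_⟩
    rcases lt_or_le_of_mem_Sset hp with hp' | hp'
    · exact Or.inl ⟨hp', by linarith⟩
    · have : x₂ + ε ≤ p := not_lt.1 fun h' => h₂ ⟨p, hp, mem_image_fract_of_mem ⟨hp', h'⟩ hp.1⟩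
      exact Or.inr ⟨hp', by linarith⟩
  have := eq_zero_of_forall_add_mem (fun _ hp => Ico_subset_Icc_self (Sset_subset_diff hp).1)
    hS hshift
  linarith

theorem Sset_accumulates_left_of_one_or_x₁ (hx : x₁ ≤ x₂) (hS : (Sset α x₁ x₂).Nonempty)
    {ε : ℝ} (hε : 0 < ε) :
    (Sset α x₁ x₂ ∩ Ico (1 - ε) 1).Nonempty ∨
      (Sset α x₁ x₂ ∩ Int.fract '' Ico (x₁ - ε) x₁).Nonempty := by
  by_contra h
  rw [not_or] at h
  obtain ⟨h₁, h₂⟩ := h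
  have hshift : ∀ p ∈ Sset α x₁ x₂, p + ε ∈ Sset α x₁ x₂ := by
    refine add_mem_Sset_of_forall hx fun p hp => ?_
    have hpε : p < 1 - ε := not_le.1 fun h' => h₁ ⟨p, hp, h', hp.1.2⟩
    refine ⟨⟨by linarith [hp.1.1], by linarith⟩, ?_⟩
    rcases lt_or_le_of_mem_Sset hp with hp' | hp'
    · have : p < x₁ - ε := not_le.1 fun h' => h₂ ⟨p, hp, mem_image_fract_of_mem ⟨h', hp'⟩ hp.1⟩
      exact Or.inl ⟨hp', by linarith⟩
    · exact Or.inr ⟨hp', by linarith⟩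
  have := eq_zero_of_forall_add_mem (fun _ hp => Ico_subset_Icc_self (Sset_subset_diff hp).1)
    hS hshift
  linarith

theorem iterate_add_eq_of_mem_Sset {ε : ℝ} (hS₁ : ∀ p ∈ Sset α x₁ x₂, p < 1 - ε) {s e : ℝ}
    (he₀ : 0 ≤ e) (heε : e ≤ ε) (heH : e ≤ x₂ - x₁) (hs : s ∈ Sset α x₁ x₂)
    (hse : s + e ∈ Sset α x₁ x₂) (n : ℕ) :
    (Mmap α x₁ x₂)^[n] (s + e) = (Mmap α x₁ x₂)^[n] s + e := by
  induction n with
  | zero => rfl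
  | succ n ih =>
    have hp := iterate_mem_Sset hs n
    have hq := iterate_mem_Sset hse n
    rw [ih] at hq
    have hpiece : (Mmap α x₁ x₂)^[n] s < x₁ ∧ (Mmap α x₁ x₂)^[n] s + e < x₁ ∨
        x₂ ≤ (Mmap α x₁ x₂)^[n] s ∧ x₂ ≤ (Mmap α x₁ x₂)^[n] s + e := by
      rcases lt_or_le_of_mem_Sset hp with h | h
      · exact Or.inl ⟨h, by rcases lt_or_le_of_mem_Sset hq with h' | h' <;> linarith⟩
      · exact Or.inr ⟨h, by linarith⟩
    have hMp := mapsTo_Mmap_Sset hp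
    rw [iterate_succ_apply', iterate_succ_apply', ih, Mmap_eq_fract_add_sub (by linarith) hpiece,
      add_sub_cancel_left, Int.fract_eq_self.2 ⟨by linarith [hMp.1.1], by linarith [hS₁ _ hMp]⟩]

theorem isPeriodicPt_of_abs_iterate_sub_le {ε : ℝ} (hS₁ : ∀ p ∈ Sset α x₁ x₂, p < 1 - ε)
    {a : ℝ} (ha : a ∈ Sset α x₁ x₂) {Δ : ℕ} (hε : |(Mmap α x₁ x₂)^[Δ] a - a| ≤ ε)
    (hH : |(Mmap α x₁ x₂)^[Δ] a - a| ≤ x₂ - x₁) : IsPeriodicPt (Mmap α x₁ x₂) Δ a := by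
  set g := (Mmap α x₁ x₂)^[Δ] a - a with hg
  have hshift : ∀ n, (Mmap α x₁ x₂)^[n + Δ] a = (Mmap α x₁ x₂)^[n] a + g := by
    intro n
    rw [iterate_add_apply]
    rcases le_total 0 g with h | h
    · have hag : a + g = (Mmap α x₁ x₂)^[Δ] a := by rw [hg]; ring
      have := iterate_add_eq_of_mem_Sset hS₁ h ((le_abs_self g).trans hε)
        ((le_abs_self g).trans hH) ha (hag ▸ iterate_mem_Sset ha Δ) n
      rwa [hag] at this
    · have hag : (Mmap α x₁ x₂)^[Δ] a + -g = a := by rw [hg]; ring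
      have := iterate_add_eq_of_mem_Sset hS₁ (neg_nonneg.2 h) ((neg_le_abs g).trans hε)
        ((neg_le_abs g).trans hH) (iterate_mem_Sset ha Δ) (by rw [hag]; exact ha) n
      rw [hag] at this
      linarith
  have hk : ∀ k : ℕ, (Mmap α x₁ x₂)^[k * Δ] a = a + k * g := by
    intro k
    induction k with
    | zero => simp
    | succ k ih => rw [Nat.succ_mul, hshift, ih]; push_cast; ring
  have hg₀ : g = 0 := eq_zero_of_forall_add_nat_mul_mem_Icc fun k =>
    hk k ▸ Ico_subset_Icc_self (iterate_mem_Sset ha (k * Δ)).1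
  exact sub_eq_zero.1 hg₀

theorem exists_isPeriodicPt_of_mem_Sset (hx : x₁ < x₂) {ε : ℝ} (hε : 0 < ε)
    (hS₁ : ∀ p ∈ Sset α x₁ x₂, p < 1 - ε) {s : ℝ} (hs : s ∈ Sset α x₁ x₂) :
    ∃ Δ > 0, IsPeriodicPt (Mmap α x₁ x₂) Δ s := by
  obtain ⟨p, q, hpq, hclose⟩ := exists_lt_abs_sub_lt_of_forall_mem_Icc
    (fun n => Ico_subset_Icc_self (iterate_mem_Sset hs n).1) (lt_min hε (sub_pos.2 hx))
  have hqp : (Mmap α x₁ x₂)^[q - p] ((Mmap α x₁ x₂)^[p] s) = (Mmap α x₁ x₂)^[q] s := by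
    rw [← iterate_add_apply, Nat.sub_add_cancel hpq.le]
  have hper : IsPeriodicPt (Mmap α x₁ x₂) (q - p) ((Mmap α x₁ x₂)^[p] s) := by
    apply isPeriodicPt_of_abs_iterate_sub_le hS₁ (iterate_mem_Sset hs p) <;> rw [hqp] <;>
      linarith [min_le_left ε (x₂ - x₁), min_le_right ε (x₂ - x₁)]
  refine ⟨q - p, Nat.sub_pos_of_lt hpq, ?_⟩
  refine ((injOn_Mmap hx.le).mono Sset_subset_diff).iterate mapsTo_Mmap_Sset p
    (iterate_mem_Sset hs (q - p)) hs ?_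
  rw [← iterate_add_apply, Nat.add_sub_cancel' hpq.le, ← hqp]
  exact hper

theorem Sset_accumulates_at_zero (hx₀ : 0 ≤ x₁) (hx : x₁ < x₂) (hx₂ : x₂ ≤ 1)
    (hS : (Sset α x₁ x₂).Nonempty) {ε : ℝ} (hε : 0 < ε) :
    (Sset α x₁ x₂ ∩ Ico 0 ε).Nonempty ∨ (Sset α x₁ x₂ ∩ Ico (1 - ε) 1).Nonempty := by
  by_contra h
  rw [not_or] at h
  obtain ⟨h₀, h₁⟩ := h
  have hS₀ : ∀ p ∈ Sset α x₁ x₂, ε ≤ p := fun p hp => not_lt.1 fun h' => h₀ ⟨p, hp, hp.1.1, h'⟩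
  have hS₁ : ∀ p ∈ Sset α x₁ x₂, p < 1 - ε := fun p hp => not_le.1 fun h' => h₁ ⟨p, hp, h', hp.1.2⟩
  set θ := min ε (x₂ - x₁) / 2 with hθ
  have hθ₀ : 0 < θ := half_pos (lt_min hε (sub_pos.2 hx))
  have hθε : 2 * θ ≤ ε := by linarith [min_le_left ε (x₂ - x₁)]
  have hθH : 2 * θ ≤ x₂ - x₁ := by linarith [min_le_right ε (x₂ - x₁)]
  obtain ⟨z, hz, hzx⟩ : ∃ z ∈ Sset α x₁ x₂, z ∈ Ico x₂ (x₂ + θ) := by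
    rcases Sset_accumulates_right_of_zero_or_x₂ hx.le hS hθ₀ with ⟨z, hz, hz'⟩ | ⟨z, hz, hz'⟩
    · linarith [hS₀ z hz, hz'.2]
    · rcases image_fract_Ico_subset_right (hx₀.trans hx.le) hx₂ θ hz' with h | h
      · exact ⟨z, hz, h⟩
      · linarith [hS₀ z hz, h.2]
  obtain ⟨p, hp, hpx⟩ : ∃ p ∈ Sset α x₁ x₂, p ∈ Ico (x₁ - θ) x₁ := by
    rcases Sset_accumulates_left_of_one_or_x₁ hx.le hS hθ₀ with ⟨p, hp, hp'⟩ | ⟨p, hp, hp'⟩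
    · linarith [hS₁ p hp, hp'.1]
    · rcases image_fract_Ico_subset_left hx₀ (hx.le.trans hx₂) θ hp' with h | h
      · exact ⟨p, hp, h⟩
      · linarith [hS₁ p hp, h.1]
  obtain ⟨Δ, hΔ, hper⟩ := exists_isPeriodicPt_of_mem_Sset hx hε hS₁ hp
  obtain ⟨k, rfl⟩ := Nat.exists_eq_succ_of_ne_zero hΔ.ne'
  have hMp := mapsTo_Mmap_Sset hp
  have hMz : Mmap α x₁ x₂ z = Mmap α x₁ x₂ p + ((z - x₂) + (x₁ - p)) := by
    rw [Mmap_eq_fract_add_of_lt_of_le hx.le hpx.2 hzx.1,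
      Int.fract_eq_self.2 ⟨by linarith [hMp.1.1, hzx.1, hpx.2],
        by linarith [hS₁ _ hMp, hzx.2, hpx.1]⟩]
  have hreturn := iterate_add_eq_of_mem_Sset hS₁ (by linarith [hzx.1, hpx.2])
    (by linarith [hzx.2, hpx.1]) (by linarith [hzx.2, hpx.1]) hMp (hMz ▸ mapsTo_Mmap_Sset hz) k
  rw [← hMz, ← iterate_succ_apply, ← iterate_succ_apply, hper] at hreturn
  exact hz.2 (k + 1) ⟨by rw [hreturn]; linarith [hzx.1], by rw [hreturn]; linarith [hzx.2]⟩

theorem add_mem_Sset_of_zero_mem (hx : x₁ ≤ x₂) (h₀ : (0 : ℝ) ∈ Sset α x₁ x₂) {δ : ℝ}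
    (hU : ∀ p ∈ Sset α x₁ x₂, p < x₁ → p + δ < x₁) {p d : ℝ} (hp : p ∈ Sset α x₁ x₂)
    (hd : d ∈ Ico 0 δ) (hpd : p + d < 1) : p + d ∈ Sset α x₁ x₂ := by
  have hpiece : ∀ p ∈ Sset α x₁ x₂, ∀ d ∈ Ico 0 δ, p < x₁ ∧ p + d < x₁ ∨ x₂ ≤ p ∧ x₂ ≤ p + d :=
    fun p hp d hd => (lt_or_le_of_mem_Sset hp).imp
      (fun h => ⟨h, by linarith [hU p hp h, hd.2]⟩) (fun h => ⟨h, by linarith [hd.1]⟩)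
  let W := {w | ∃ p ∈ Sset α x₁ x₂, ∃ d ∈ Ico 0 δ, p + d < 1 ∧ p + d = w}
  refine subset_Sset_of_mapsTo (W := W) ?_ ?_ ⟨p, hp, d, hd, hpd, rfl⟩
  · rintro _ ⟨p, hp, d, hd, hpd, rfl⟩
    refine ⟨⟨by linarith [hp.1.1, hd.1], hpd⟩, fun hH => ?_⟩
    rcases hpiece p hp d hd with ⟨-, h⟩ | ⟨-, h⟩
    · exact not_le.2 h hH.1
    · exact not_lt.2 h hH.2
  · rintro _ ⟨p, hp, d, hd, hpd, rfl⟩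
    have hMp := mapsTo_Mmap_Sset hp
    rw [Mmap_eq_fract_add_sub hx (hpiece p hp d hd), add_sub_cancel_left]
    by_cases hwrap : Mmap α x₁ x₂ p + d < 1
    · exact ⟨_, hMp, d, hd, hwrap, (Int.fract_eq_self.2 ⟨by linarith [hMp.1.1, hd.1], hwrap⟩).symm⟩
    · have hd₁ : d < 1 := by linarith [hp.1.1]
      have hfr : Int.fract (Mmap α x₁ x₂ p + d) = 0 + (Mmap α x₁ x₂ p + d - 1) :=
        Int.fract_eq_iff.2 ⟨by linarith, by linarith [hMp.1.2], 1, by push_cast; ring⟩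
      exact ⟨0, h₀, _, ⟨by linarith, by linarith [hMp.1.2, hd.2]⟩, by linarith [hMp.1.2],
        hfr.symm⟩

theorem Sset_accumulates_at_H (hx₀ : 0 ≤ x₁) (hx : x₁ < x₂) (hx₂ : x₂ ≤ 1)
    (hS : (Sset α x₁ x₂).Nonempty) {ε : ℝ} (hε : 0 < ε) :
    (Sset α x₁ x₂ ∩ Int.fract '' Ico (x₁ - ε) x₁).Nonempty ∨
      (Sset α x₁ x₂ ∩ Int.fract '' Ico x₂ (x₂ + ε)).Nonempty := by
  by_contra h
  rw [not_or] at h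
  obtain ⟨h₁, h₂⟩ := h
  have h₀ : (0 : ℝ) ∈ Sset α x₁ x₂ := by
    refine mem_Sset_of_forall_inter_Ico_nonempty hx.le ⟨le_rfl, one_pos⟩ fun θ hθ => ?_
    rcases Sset_accumulates_right_of_zero_or_x₂ hx.le hS (lt_min hθ hε) with h | ⟨z, hz, hz'⟩
    · exact h.mono (inter_subset_inter_right _ (Ico_subset_Ico_right (by simp)))
    · exact (h₂ ⟨z, hz, image_mono (Ico_subset_Ico_right (by simp)) hz'⟩).elim
  have hU : ∀ p ∈ Sset α x₁ x₂, p < x₁ → p + ε < x₁ := fun p hp hpx =>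
    not_le.1 fun h' => h₁ ⟨p, hp, mem_image_fract_of_mem ⟨by linarith, hpx⟩ hp.1⟩
  have hx₁ : x₁ ∈ Sset α x₁ x₂ :=
    Ico_subset_of_forall_add_mem hε h₀
      (fun _ hp _ hd hpd => add_mem_Sset_of_zero_mem hx.le h₀ hU hp hd hpd) ⟨hx₀, hx.trans_le hx₂⟩
  exact hx₁.2 0 ⟨le_rfl, hx⟩

theorem maximalInvariantSet_accumulation_general (α x₁ x₂ : ℝ)
    (hx0 : 0 ≤ x₁) (hx : x₁ < x₂) (hx2 : x₂ ≤ 1)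
    (hS : (Sset α x₁ x₂).Nonempty) (ε : ℝ) (hε0 : 0 < ε) :
    ((Sset α x₁ x₂ ∩ Set.Ico 0 ε).Nonempty ∨
      (Sset α x₁ x₂ ∩ Int.fract '' Set.Ico x₂ (x₂ + ε)).Nonempty) ∧
    ((Sset α x₁ x₂ ∩ Set.Ico (1 - ε) 1).Nonempty ∨
      (Sset α x₁ x₂ ∩ Int.fract '' Set.Ico (x₁ - ε) x₁).Nonempty) ∧
    ((Sset α x₁ x₂ ∩ Set.Ico 0 ε).Nonempty ∨
      (Sset α x₁ x₂ ∩ Set.Ico (1 - ε) 1).Nonempty) ∧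
    ((Sset α x₁ x₂ ∩ Int.fract '' Set.Ico (x₁ - ε) x₁).Nonempty ∨
      (Sset α x₁ x₂ ∩ Int.fract '' Set.Ico x₂ (x₂ + ε)).Nonempty) :=
  ⟨Sset_accumulates_right_of_zero_or_x₂ hx.le hS hε0,
    Sset_accumulates_left_of_one_or_x₁ hx.le hS hε0,
    Sset_accumulates_at_zero hx0 hx hx2 hS hε0,
    Sset_accumulates_at_H hx0 hx hx2 hS hε0⟩

/-- If `𝓢 ≠ ∅`, then for every `0 < ε < 1`, `𝓢` meets certain small arcs near
`0`, `1`, `x₁` and `x₂`. -/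
theorem maximalInvariantSet_accumulation (α x₁ x₂ : ℝ) (hα0 : 0 ≤ α) (hα1 : α < 1)
    (hx0 : 0 ≤ x₁) (hx : x₁ < x₂) (hx2 : x₂ ≤ 1)
    (hS : (Sset α x₁ x₂).Nonempty) (ε : ℝ) (hε0 : 0 < ε) (hε1 : ε < 1) :
    ((Sset α x₁ x₂ ∩ Set.Ico 0 ε).Nonempty ∨
      (Sset α x₁ x₂ ∩ Int.fract '' Set.Ico x₂ (x₂ + ε)).Nonempty) ∧
    ((Sset α x₁ x₂ ∩ Set.Ico (1 - ε) 1).Nonempty ∨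
      (Sset α x₁ x₂ ∩ Int.fract '' Set.Ico (x₁ - ε) x₁).Nonempty) ∧
    ((Sset α x₁ x₂ ∩ Set.Ico 0 ε).Nonempty ∨
      (Sset α x₁ x₂ ∩ Set.Ico (1 - ε) 1).Nonempty) ∧
    ((Sset α x₁ x₂ ∩ Int.fract '' Set.Ico (x₁ - ε) x₁).Nonempty ∨
      (Sset α x₁ x₂ ∩ Int.fract '' Set.Ico x₂ (x₂ + ε)).Nonempty) :=
  maximalInvariantSet_accumulation_general α x₁ x₂ hx0 hx hx2 hS ε hε0
end
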